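/- arXiv:2405.04525 — 14 statements merged into one kernel-verified Lean document; each statement's English description precedes it below -/
import Mathlib

section
/- For every ballot A and every axis ◁, the Minimum Swaps cost is at most the Forbidden Triples cost: cost_MS(A,◁) ≤ cost_FT(A,◁). -/
open scoped Classical

variable {C : Type*}

/-- `r` is an axis: a strict linear order on the candidates. -/
def IsAxis (r : C → C → Prop) : Prop :=
  (∀ x y : C, x = y ∨ r x y ∨ r y x) ∧ (∀ x y z : C, r x y → r y z → r x z) ∧ (∀ x : C, ¬ r x x)

/-- `A` is an interval of the axis `r`. -/
def IsInterval (r : C → C → Prop) (A : Set C) : Prop :=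
  ∀ a ∈ A, ∀ b ∈ A, ∀ c : C, r a c → r c b → c ∈ A

/-- Voter Deletion cost. -/
noncomputable def costVD (r : C → C → Prop) (A : Set C) : ℕ :=
  if IsInterval r A then 0 else 1

/-- Minimum Flips cost. -/
noncomputable def costMF (r : C → C → Prop) (A : Set C) : ℕ :=
  sInf {n : ℕ | ∃ x ∈ A, ∃ y ∈ A, (r x y ∨ x = y) ∧
    n = {z ∈ A | r z x ∨ r y z}.ncard + {z : C | z ∉ A ∧ r x z ∧ r z y}.ncard}

/-- Ballot Completion cost. -/
noncomputable def costBC (r : C → C → Prop) (A : Set C) : ℕ :=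
  {b : C | b ∉ A ∧ ∃ a ∈ A, ∃ c ∈ A, r a b ∧ r b c}.ncard

/-- Minimum Swaps cost. -/
noncomputable def costMS [Fintype C] (r : C → C → Prop) (A : Set C) : ℕ :=
  ∑ x : C, if x ∈ A then 0 else min {y ∈ A | r y x}.ncard {y ∈ A | r x y}.ncard

/-- Forbidden Triples cost. -/
noncomputable def costFT (r : C → C → Prop) (A : Set C) : ℕ :=
  {t : C × C × C | t.1 ∈ A ∧ t.2.2 ∈ A ∧ t.2.1 ∉ A ∧ r t.1 t.2.1 ∧ r t.2.1 t.2.2}.ncard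

/-- Total cost of an axis on a profile (multiset of ballots). -/
noncomputable def profileCost (cost : (C → C → Prop) → Set C → ℕ)
    (P : Multiset (Set C)) (r : C → C → Prop) : ℕ :=
  (P.map (cost r)).sum

/-- `r` is an optimal axis for profile `P` under the given cost function. -/
def OptimalAxis (cost : (C → C → Prop) → Set C → ℕ)
    (P : Multiset (Set C)) (r : C → C → Prop) : Prop :=
  IsAxis r ∧ ∀ r' : C → C → Prop, IsAxis r' → profileCost cost P r ≤ profileCost cost P r'

theorem costMS_le_costFT [Fintype C] (r : C → C → Prop) (hr : IsAxis r)
    (A : Set C) :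
    costMS r A ≤ costFT r A := by
  classical
  set T : Finset (C × C × C) := Finset.univ.filter
    (fun t : C × C × C => t.1 ∈ A ∧ t.2.2 ∈ A ∧ t.2.1 ∉ A ∧ r t.1 t.2.1 ∧ r t.2.1 t.2.2)
    with hT
  have hFT : costFT r A = T.card := by
    rw [costFT, ← Set.ncard_coe_finset]
    congr 1
    ext t
    simp [hT]
  have hfib : T.card = ∑ y : C, (T.filter (fun t => t.2.1 = y)).card :=
    Finset.card_eq_sum_card_fiberwise (fun t _ => Finset.mem_univ _)
  have hL : ∀ x : C, {y ∈ A | r y x}.ncard = (Finset.univ.filter fun y => y ∈ A ∧ r y x).card := by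
    intro x; rw [← Set.ncard_coe_finset]; congr 1; ext y; simp
  have hR : ∀ x : C, {y ∈ A | r x y}.ncard = (Finset.univ.filter fun y => y ∈ A ∧ r x y).card := by
    intro x; rw [← Set.ncard_coe_finset]; congr 1; ext y; simp
  rw [hFT, hfib, costMS]
  refine Finset.sum_le_sum fun x _ => ?_
  by_cases hx : x ∈ A
  · simp [hx]
  · rw [if_neg hx, hL, hR]
    have hcard : (T.filter (fun t => t.2.1 = x)).card =
        (Finset.univ.filter fun y => y ∈ A ∧ r y x).card *
        (Finset.univ.filter fun y => y ∈ A ∧ r x y).card := by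
      rw [← Finset.card_product]
      apply Finset.card_bij (fun t _ => (t.1, t.2.2))
      · intro t ht
        simp only [hT, Finset.mem_filter, Finset.mem_univ, true_and] at ht
        simp only [Finset.mem_product, Finset.mem_filter, Finset.mem_univ, true_and]
        obtain ⟨⟨h1, h2, _, h4, h5⟩, heq⟩ := ht
        exact ⟨⟨h1, heq ▸ h4⟩, ⟨h2, heq ▸ h5⟩⟩
      · intro t1 ht1 t2 ht2 h
        simp only [hT, Finset.mem_filter] at ht1 ht2
        obtain ⟨a, b, c⟩ := t1
        obtain ⟨a', b', c'⟩ := t2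
        simp only [Prod.mk.injEq] at h ⊢
        exact ⟨h.1, ht1.2.trans ht2.2.symm, h.2⟩
      · intro p hp
        simp only [Finset.mem_product, Finset.mem_filter, Finset.mem_univ, true_and] at hp
        refine ⟨(p.1, x, p.2), ?_, rfl⟩
        simp [hT, hp.1.1, hp.2.1, hx, hp.1.2, hp.2.2]
    rw [hcard]
    set a := (Finset.univ.filter fun y => y ∈ A ∧ r y x).card
    set b := (Finset.univ.filter fun y => y ∈ A ∧ r x y).card
    rcases Nat.eq_zero_or_pos b with hb | hb
    · simp [hb]
    · calc min a b ≤ a := min_le_left _ _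
        _ ≤ a * b := Nat.le_mul_of_pos_right _ hb
end

section
/- The Minimum Swaps cost formula is correct: for every ballot A and axis ◁, the minimum Kendall-tau swap distance between ◁ and some axis ◁' of which A is an interval equals Σ_{x ∉ A} min(|{y ∈ A : y ◁ x}|, |{y ∈ A : x ◁ y}|). -/
open scoped Classical

variable {C : Type*}

/-- Kendall-tau distance between two axes: the number of (ordered representatives of
unordered) pairs on which they disagree. -/
noncomputable def kendallTau (r r' : C → C → Prop) : ℕ :=
  {p : C × C | r p.1 p.2 ∧ r' p.2 p.1}.ncard

-- helpers
lemma ncard_eq_filter_card {α : Type*} [Fintype α] (Q : α → Prop) [DecidablePred Q] :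
    {x | Q x}.ncard = (Finset.univ.filter Q).card := by
  simp [Set.ncard_eq_toFinset_card', Set.toFinset_setOf]

section Main
variable [Fintype C]

/-- left cost of x. -/
noncomputable def cL (r : C → C → Prop) (A : Set C) (x : C) : ℕ := {y ∈ A | r y x}.ncard
noncomputable def cR (r : C → C → Prop) (A : Set C) (x : C) : ℕ := {y ∈ A | r x y}.ncard

/-- section of an element in the constructed axis -/
noncomputable def secf (r : C → C → Prop) (A : Set C) (c : C) : ℕ :=
  if c ∈ A then 1 else if cL r A c ≤ cR r A c then 0 else 2

/-- the constructed axis -/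
noncomputable def raux (r : C → C → Prop) (A : Set C) (x y : C) : Prop :=
  secf r A x < secf r A y ∨ (secf r A x = secf r A y ∧ r x y)

lemma cL_mono (r : C → C → Prop) (hr : IsAxis r) (A : Set C) {x x' : C} (h : r x' x) :
    cL r A x' ≤ cL r A x :=
  Set.ncard_le_ncard (fun y hy => ⟨hy.1, hr.2.1 _ _ _ hy.2 h⟩) (Set.toFinite _)

lemma cR_mono (r : C → C → Prop) (hr : IsAxis r) (A : Set C) {x x' : C} (h : r x' x) :
    cR r A x ≤ cR r A x' :=
  Set.ncard_le_ncard (fun y hy => ⟨hy.1, hr.2.1 _ _ _ h hy.2⟩) (Set.toFinite _)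

lemma secf_mono (r : C → C → Prop) (hr : IsAxis r) (A : Set C) {x x' : C}
    (hx : x ∉ A) (hx' : x' ∉ A) (h : r x' x) (h0 : secf r A x = 0) : secf r A x' = 0 := by
  unfold secf at *
  rw [if_neg hx] at h0
  have hle : cL r A x ≤ cR r A x := by by_contra hc; rw [if_neg hc] at h0; omega
  rw [if_neg hx', if_pos (le_trans (cL_mono r hr A h) (le_trans hle (cR_mono r hr A h)))]

lemma raux_axis (r : C → C → Prop) (hr : IsAxis r) (A : Set C) : IsAxis (raux r A) := by
  obtain ⟨htot, htr, hirr⟩ := hr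
  refine ⟨fun x y => ?_, fun x y z hxy hyz => ?_, fun x hx => ?_⟩
  · rcases htot x y with h | h | h
    · exact Or.inl h
    · rcases lt_trichotomy (secf r A x) (secf r A y) with hs | hs | hs
      · exact Or.inr (Or.inl (Or.inl hs))
      · exact Or.inr (Or.inl (Or.inr ⟨hs, h⟩))
      · exact Or.inr (Or.inr (Or.inl hs))
    · rcases lt_trichotomy (secf r A x) (secf r A y) with hs | hs | hs
      · exact Or.inr (Or.inl (Or.inl hs))
      · exact Or.inr (Or.inr (Or.inr ⟨hs.symm, h⟩))
      · exact Or.inr (Or.inr (Or.inl hs))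
  · rcases hxy with h1 | ⟨h1, h1'⟩ <;> rcases hyz with h2 | ⟨h2, h2'⟩
    · exact Or.inl (lt_trans h1 h2)
    · exact Or.inl (h2 ▸ h1)
    · exact Or.inl (h1 ▸ h2)
    · exact Or.inr ⟨h1.trans h2, htr _ _ _ h1' h2'⟩
  · rcases hx with h | ⟨_, h⟩
    · exact lt_irrefl _ h
    · exact hirr _ h

lemma raux_interval (r : C → C → Prop) (A : Set C) : IsInterval (raux r A) A := by
  intro a ha b hb c hac hcb
  by_contra hc
  have hsa : secf r A a = 1 := by unfold secf; rw [if_pos ha]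
  have hsb : secf r A b = 1 := by unfold secf; rw [if_pos hb]
  have hsc : secf r A c = 0 ∨ secf r A c = 2 := by
    unfold secf; rw [if_neg hc]; split <;> simp
  rcases hac with h | ⟨h, _⟩ <;> rcases hcb with h' | ⟨h', _⟩ <;> omega

lemma secf_mem {A : Set C} {r : C → C → Prop} {a : C} (ha : a ∈ A) : secf r A a = 1 := by
  unfold secf; rw [if_pos ha]

lemma secf_cases {A : Set C} {r : C → C → Prop} {a : C} (ha : a ∉ A) :
    secf r A a = 0 ∨ secf r A a = 2 := by
  unfold secf; rw [if_neg ha]; split <;> simp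

lemma cL_eq (r : C → C → Prop) (A : Set C) (x : C) :
    cL r A x = (Finset.univ.filter fun y => y ∈ A ∧ r y x).card :=
  ncard_eq_filter_card _

lemma cR_eq (r : C → C → Prop) (A : Set C) (x : C) :
    cR r A x = (Finset.univ.filter fun y => y ∈ A ∧ r x y).card :=
  ncard_eq_filter_card _

lemma kendall_raux (r : C → C → Prop) (hr : IsAxis r) (A : Set C) :
    kendallTau r (raux r A) = costMS r A := by
  have hasym : ∀ x y, r x y → ¬ r y x := fun x y h h' => hr.2.2 x (hr.2.1 _ _ _ h h')
  have hset : {p : C × C | r p.1 p.2 ∧ raux r A p.2 p.1}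
      = {p : C × C | r p.1 p.2 ∧ secf r A p.2 < secf r A p.1} := by
    ext p
    simp only [Set.mem_setOf_eq, raux]
    constructor
    · rintro ⟨h1, h2 | ⟨_, h2⟩⟩
      · exact ⟨h1, h2⟩
      · exact absurd h1 (hasym _ _ h2)
    · rintro ⟨h1, h2⟩; exact ⟨h1, Or.inl h2⟩
  rw [kendallTau, hset, ncard_eq_filter_card]
  rw [Finset.card_eq_sum_card_fiberwise
    (f := fun p : C × C => if p.1 ∈ A then p.2 else p.1) (t := Finset.univ)
    (fun p _ => Finset.mem_univ _)]
  rw [costMS]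
  refine Finset.sum_congr rfl fun x _ => ?_
  by_cases hx : x ∈ A
  · rw [if_pos hx, Finset.card_eq_zero, Finset.filter_eq_empty_iff]
    rintro p hp h3
    obtain ⟨-, h1, h2⟩ := Finset.mem_filter.mp hp
    by_cases hp1 : p.1 ∈ A
    · rw [if_pos hp1] at h3
      rw [secf_mem hp1, h3, secf_mem hx] at h2
      omega
    · rw [if_neg hp1] at h3
      exact hp1 (h3 ▸ hx)
  · rw [if_neg hx]
    show _ = min (cL r A x) (cR r A x)
    by_cases hcase : cL r A x ≤ cR r A x
    · have hsx : secf r A x = 0 := by unfold secf; rw [if_neg hx, if_pos hcase]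
      rw [min_eq_left hcase, cL, ncard_eq_filter_card]
      have hmem : ∀ p : C × C, p ∈ (Finset.univ.filter fun p : C × C =>
          r p.1 p.2 ∧ secf r A p.2 < secf r A p.1) →
          (if p.1 ∈ A then p.2 else p.1) = x → p.1 ∈ A ∧ p.2 = x ∧ r p.1 x := by
        intro p hp h3
        obtain ⟨-, h1, h2⟩ := Finset.mem_filter.mp hp
        by_cases hp1 : p.1 ∈ A
        · rw [if_pos hp1] at h3
          exact ⟨hp1, h3, h3 ▸ h1⟩
        · exfalso
          rw [if_neg hp1] at h3
          rw [h3, hsx] at h2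
          omega
      refine Finset.card_bij (fun p _ => p.1) ?_ ?_ ?_
      · intro p hp
        obtain ⟨hp', h3⟩ := Finset.mem_filter.mp hp
        obtain ⟨h1, h2, h4⟩ := hmem p hp' h3
        exact Finset.mem_filter.mpr ⟨Finset.mem_univ _, h1, h4⟩
      · intro a ha b hb hab
        obtain ⟨ha', h3⟩ := Finset.mem_filter.mp ha
        obtain ⟨hb', h3'⟩ := Finset.mem_filter.mp hb
        obtain ⟨-, ha2, -⟩ := hmem a ha' h3
        obtain ⟨-, hb2, -⟩ := hmem b hb' h3'
        exact Prod.ext hab (ha2.trans hb2.symm)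
      · intro y hy
        obtain ⟨-, hy1, hy2⟩ := Finset.mem_filter.mp hy
        refine ⟨(y, x), Finset.mem_filter.mpr ⟨Finset.mem_filter.mpr
          ⟨Finset.mem_univ _, hy2, by rw [hsx, secf_mem hy1]; omega⟩, by rw [if_pos hy1]⟩, rfl⟩
    · have hsx : secf r A x = 2 := by unfold secf; rw [if_neg hx, if_neg hcase]
      rw [min_eq_right (le_of_lt (lt_of_not_ge hcase)), cR, ncard_eq_filter_card]
      have hmem : ∀ p : C × C, p ∈ (Finset.univ.filter fun p : C × C =>
          r p.1 p.2 ∧ secf r A p.2 < secf r A p.1) →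
          (if p.1 ∈ A then p.2 else p.1) = x → p.1 = x ∧ p.2 ∈ A ∧ r x p.2 := by
        intro p hp h3
        obtain ⟨-, h1, h2⟩ := Finset.mem_filter.mp hp
        by_cases hp1 : p.1 ∈ A
        · exfalso
          rw [if_pos hp1] at h3
          rw [h3, hsx, secf_mem hp1] at h2
          omega
        · rw [if_neg hp1] at h3
          have hp2 : p.2 ∈ A := by
            by_contra hp2
            rcases secf_cases (r := r) hp2 with h0 | h0
            · have := secf_mono r hr A hp2 hx (h3 ▸ h1) h0
              rw [this] at hsx; omega
            · rw [h0, h3, hsx] at h2; omega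
          exact ⟨h3, hp2, h3 ▸ h1⟩
      refine Finset.card_bij (fun p _ => p.2) ?_ ?_ ?_
      · intro p hp
        obtain ⟨hp', h3⟩ := Finset.mem_filter.mp hp
        obtain ⟨h1, h2, h4⟩ := hmem p hp' h3
        exact Finset.mem_filter.mpr ⟨Finset.mem_univ _, h2, h4⟩
      · intro a ha b hb hab
        obtain ⟨ha', h3⟩ := Finset.mem_filter.mp ha
        obtain ⟨hb', h3'⟩ := Finset.mem_filter.mp hb
        obtain ⟨ha1, -, -⟩ := hmem a ha' h3
        obtain ⟨hb1, -, -⟩ := hmem b hb' h3'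
        exact Prod.ext (ha1.trans hb1.symm) hab
      · intro y hy
        obtain ⟨-, hy1, hy2⟩ := Finset.mem_filter.mp hy
        refine ⟨(x, y), Finset.mem_filter.mpr ⟨Finset.mem_filter.mpr
          ⟨Finset.mem_univ _, hy2, by rw [hsx, secf_mem hy1]; omega⟩, by rw [if_neg hx]⟩, rfl⟩

lemma lower_bound (r : C → C → Prop) (hr : IsAxis r) (A : Set C) (r' : C → C → Prop)
    (hr' : IsAxis r') (hint : IsInterval r' A) :
    costMS r A ≤ kendallTau r r' := by
  rw [kendallTau, ncard_eq_filter_card, costMS]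
  set D : Finset (C × C) := Finset.univ.filter (fun p : C × C => r p.1 p.2 ∧ r' p.2 p.1) with hD
  set D' : Finset (C × C) := D.filter
    (fun p => (p.1 ∈ A ∧ p.2 ∉ A) ∨ (p.1 ∉ A ∧ p.2 ∈ A)) with hD'
  have hcard : D'.card
      = ∑ x : C, (D'.filter fun p => (if p.1 ∈ A then p.2 else p.1) = x).card :=
    Finset.card_eq_sum_card_fiberwise (fun p _ => Finset.mem_univ _)
  have hmain : ∀ x : C, (if x ∈ A then 0
      else min {y ∈ A | r y x}.ncard {y ∈ A | r x y}.ncard)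
      ≤ (D'.filter fun p => (if p.1 ∈ A then p.2 else p.1) = x).card := by
    intro x
    by_cases hx : x ∈ A
    · rw [if_pos hx]; exact Nat.zero_le _
    · rw [if_neg hx]
      by_cases h : ∀ a ∈ A, r' x a
      · refine le_trans (min_le_left _ _) ?_
        rw [show ({y ∈ A | r y x} : Set C).ncard = cL r A x from rfl, cL, ncard_eq_filter_card]
        apply Finset.card_le_card_of_injOn (fun y => (y, x))
        · intro y hy
          obtain ⟨-, hy1, hy2⟩ := Finset.mem_filter.mp hy
          refine Finset.mem_filter.mpr ⟨Finset.mem_filter.mpr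
            ⟨Finset.mem_filter.mpr ⟨Finset.mem_univ _, hy2, h y hy1⟩,
              Or.inl ⟨hy1, hx⟩⟩, by rw [if_pos hy1]⟩
        · intro a _ b _ hab
          exact (Prod.mk.injEq _ _ _ _ ▸ hab).1
      · push_neg at h
        obtain ⟨a, ha, hna⟩ := h
        have hax : r' a x := by
          rcases hr'.1 a x with h1 | h1 | h1
          · exact absurd (h1 ▸ ha) hx
          · exact h1
          · exact absurd h1 hna
        have hall : ∀ b ∈ A, r' b x := by
          intro b hb
          rcases hr'.1 b x with h1 | h1 | h1
          · exact absurd (h1 ▸ hb) hx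
          · exact h1
          · exact absurd (hint a ha b hb x hax h1) hx
        refine le_trans (min_le_right _ _) ?_
        rw [show ({y ∈ A | r x y} : Set C).ncard = cR r A x from rfl, cR, ncard_eq_filter_card]
        apply Finset.card_le_card_of_injOn (fun y => (x, y))
        · intro y hy
          obtain ⟨-, hy1, hy2⟩ := Finset.mem_filter.mp hy
          refine Finset.mem_filter.mpr ⟨Finset.mem_filter.mpr
            ⟨Finset.mem_filter.mpr ⟨Finset.mem_univ _, hy2, hall y hy1⟩,
              Or.inr ⟨hx, hy1⟩⟩, by rw [if_neg hx]⟩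
        · intro a _ b _ hab
          exact (Prod.mk.injEq _ _ _ _ ▸ hab).2
  calc ∑ x : C, (if x ∈ A then 0 else min {y ∈ A | r y x}.ncard {y ∈ A | r x y}.ncard)
      ≤ ∑ x : C, (D'.filter fun p => (if p.1 ∈ A then p.2 else p.1) = x).card :=
        Finset.sum_le_sum fun x _ => hmain x
    _ = D'.card := hcard.symm
    _ ≤ D.card := Finset.card_le_card (Finset.filter_subset _ _)


end Main

theorem minSwaps_formula [Fintype C] (r : C → C → Prop) (hr : IsAxis r)
    (A : Set C) :
    sInf {n : ℕ | ∃ r' : C → C → Prop, IsAxis r' ∧ IsInterval r' A ∧ n = kendallTau r r'}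
      = costMS r A := by
  apply le_antisymm
  · exact Nat.sInf_le ⟨raux r A, raux_axis r hr A, raux_interval r A,
      (kendall_raux r hr A).symm⟩
  · refine le_csInf ⟨kendallTau r (raux r A),
      raux r A, raux_axis r hr A, raux_interval r A, rfl⟩ ?_
    rintro n ⟨r', h1, h2, rfl⟩
    exact lower_bound r hr A r' h1 h2
end

section
/- The Voter Deletion rule satisfies stability: for every approval profile P and every ballot A, the set of VD-optimal axes for P and the set of VD-optimal axes for P with A added have nonempty intersection. -/
open scoped Classical

variable {C : Type*}

lemma costVD_le_one (r : C → C → Prop) (B : Set C) : costVD r B ≤ 1 := by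
  unfold costVD; split <;> simp

lemma profileCost_cons (r : C → C → Prop) (B : Set C) (P : Multiset (Set C)) :
    profileCost costVD (B ::ₘ P) r = costVD r B + profileCost costVD P r := by
  simp [profileCost]

lemma exists_axis : ∃ r : C → C → Prop, IsAxis r := by
  refine ⟨WellOrderingRel, fun x y => ?_, fun x y z => _root_.trans, fun x => irrefl x⟩
  rcases trichotomous_of WellOrderingRel x y with h | h | h
  exacts [Or.inr (Or.inl h), Or.inl h, Or.inr (Or.inr h)]

theorem vd_stability [Fintype C] (P : Multiset (Set C)) (hP : ∀ B ∈ P, B.Nonempty)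
    (A : Set C) (hA : A.Nonempty) :
    ∃ r : C → C → Prop, OptimalAxis costVD P r ∧ OptimalAxis costVD (A ::ₘ P) r := by
  classical
  obtain ⟨r0, hax0⟩ := exists_axis (C := C)
  have hS : {n : ℕ | ∃ r, IsAxis r ∧ profileCost costVD P r = n}.Nonempty := ⟨_, r0, hax0, rfl⟩
  obtain ⟨r1, hr1ax, hr1⟩ := Nat.sInf_mem hS
  have hopt1 : ∀ r', IsAxis r' → profileCost costVD P r1 ≤ profileCost costVD P r' :=
    fun r' h => hr1 ▸ Nat.sInf_le ⟨r', h, rfl⟩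
  have hT : {n : ℕ | ∃ r, IsAxis r ∧ profileCost costVD P r = profileCost costVD P r1 ∧
      profileCost costVD (A ::ₘ P) r = n}.Nonempty := ⟨_, r1, hr1ax, rfl, rfl⟩
  obtain ⟨r, hrax, hreq, hrT⟩ := Nat.sInf_mem hT
  refine ⟨r, ⟨hrax, fun r' h => hreq ▸ hopt1 r' h⟩, hrax, fun r' h => ?_⟩
  by_contra hlt
  push_neg at hlt
  have e1 := profileCost_cons r A P
  have e2 := profileCost_cons r' A P
  have b1 := costVD_le_one r A
  have b2 := costVD_le_one r' A
  have h1 : profileCost costVD P r' ≤ profileCost costVD P r1 := by omega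
  have h2 : profileCost costVD P r' = profileCost costVD P r1 :=
    le_antisymm h1 (hopt1 r' h)
  have h3 : profileCost costVD (A ::ₘ P) r ≤ profileCost costVD (A ::ₘ P) r' :=
    hrT ▸ Nat.sInf_le ⟨r', h, h2, rfl⟩
  omega
end

section
/- The Voter Deletion rule satisfies ballot monotonicity: if ◁ ∈ VD(P), A ∈ P is not an interval of ◁, and P' is obtained from P by replacing A with its interval closure A' = {x ∈ C : ∃ y,z ∈ A, y ⊴ x ⊴ z} (closure taken with respect to ◁), then ◁ ∈ VD(P'). -/
open scoped Classical

variable {C : Type*}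

theorem vd_ballot_monotonicity [Fintype C] (P : Multiset (Set C))
    (hP : ∀ B ∈ P, B.Nonempty) (r : C → C → Prop) (hr : OptimalAxis costVD P r)
    (A : Set C) (hA : A ∈ P) (hni : ¬ IsInterval r A) :
    OptimalAxis costVD
      (({x : C | ∃ y ∈ A, ∃ z ∈ A, (r y x ∨ y = x) ∧ (r x z ∨ x = z)} : Set C) ::ₘ P.erase A)
      r := by

  obtain ⟨hax, hopt⟩ := hr
  have htrans := hax.2.1
  have hIA' : IsInterval r {x : C | ∃ y ∈ A, ∃ z ∈ A, (r y x ∨ y = x) ∧ (r x z ∨ x = z)} := by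
    rintro a ⟨y, hy, z, hz, hya, _⟩ b ⟨y', hy', z', hz', _, hbz⟩ c hac hcb
    refine ⟨y, hy, z', hz', Or.inl ?_, Or.inl ?_⟩
    · rcases hya with h | h
      · exact htrans _ _ _ h hac
      · exact h ▸ hac
    · rcases hbz with h | h
      · exact htrans _ _ _ hcb h
      · exact h ▸ hcb
  have key : ∀ (s : C → C → Prop) (B : Set C) (Q : Multiset (Set C)),
      profileCost costVD (B ::ₘ Q) s = costVD s B + profileCost costVD Q s := by
    intro s B Q; simp [profileCost, Multiset.map_cons]
  have hPdecomp : P = A ::ₘ P.erase A := (Multiset.cons_erase hA).symm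
  refine ⟨hax, fun r' hr' => ?_⟩
  rw [key r, key r']
  have h1 : costVD r {x : C | ∃ y ∈ A, ∃ z ∈ A, (r y x ∨ y = x) ∧ (r x z ∨ x = z)} = 0 :=
    if_pos hIA'
  have h2 : costVD r A = 1 := if_neg hni
  have h3 : profileCost costVD P r ≤ profileCost costVD P r' := hopt r' hr'
  rw [hPdecomp, key r, key r'] at h3
  have h4 : costVD r' A ≤ 1 := by unfold costVD; split <;> simp
  omega
end

section
/- The Ballot Completion rule satisfies ballot monotonicity: if ◁ ∈ BC(P), A ∈ P is not an interval of ◁, and P' is obtained from P by replacing A with its interval closure A' = {x ∈ C : ∃ y,z ∈ A, y ⊴ x ⊴ z} with respect to ◁, then ◁ ∈ BC(P'). -/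
open scoped Classical

variable {C : Type*}

theorem bc_ballot_monotonicity [Fintype C] (P : Multiset (Set C))
    (hP : ∀ B ∈ P, B.Nonempty) (r : C → C → Prop) (hr : OptimalAxis costBC P r)
    (A : Set C) (hA : A ∈ P) (hni : ¬ IsInterval r A) :
    OptimalAxis costBC
      (({x : C | ∃ y ∈ A, ∃ z ∈ A, (r y x ∨ y = x) ∧ (r x z ∨ x = z)} : Set C) ::ₘ P.erase A)
      r := by
  classical
  obtain ⟨hax, hopt⟩ := hr
  set A' : Set C := {x : C | ∃ y ∈ A, ∃ z ∈ A, (r y x ∨ y = x) ∧ (r x z ∨ x = z)} with hA'def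
  have hAsub : A ⊆ A' := fun a ha => ⟨a, ha, a, ha, Or.inr rfl, Or.inr rfl⟩
  have hint : IsInterval r A' := by
    rintro a ⟨y1, hy1, z1, hz1, h1, h2⟩ b ⟨y2, hy2, z2, hz2, h3, h4⟩ c hac hcb
    refine ⟨y1, hy1, z2, hz2, Or.inl ?_, Or.inl ?_⟩
    · rcases h1 with h | h
      · exact hax.2.1 _ _ _ h hac
      · exact h ▸ hac
    · rcases h4 with h | h
      · exact hax.2.1 _ _ _ hcb h
      · exact h ▸ hcb
  have hzero : costBC r A' = 0 := by
    unfold costBC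
    rw [Set.ncard_eq_zero (Set.toFinite _)]
    ext b
    simp only [Set.mem_setOf_eq, Set.mem_empty_iff_false, iff_false, not_and]
    rintro hb ⟨a, ha, c, hc, hab, hbc⟩
    exact hb (hint a ha c hc b hab hbc)
  have key : ∀ r' : C → C → Prop, costBC r' A ≤ costBC r' A' + costBC r A := by
    intro r'
    unfold costBC
    have hsub : {b : C | b ∉ A ∧ ∃ a ∈ A, ∃ c ∈ A, r' a b ∧ r' b c} ⊆
        {b : C | b ∉ A' ∧ ∃ a ∈ A', ∃ c ∈ A', r' a b ∧ r' b c} ∪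
        {b : C | b ∉ A ∧ ∃ a ∈ A, ∃ c ∈ A, r a b ∧ r b c} := by
      rintro b ⟨hb, a, ha, c, hc, hab, hbc⟩
      by_cases hbA' : b ∈ A'
      · right
        obtain ⟨y, hy, z, hz, h1, h2⟩ := hbA'
        refine ⟨hb, y, hy, z, hz, ?_, ?_⟩
        · rcases h1 with h | h
          · exact h
          · exact absurd (h ▸ hy) hb
        · rcases h2 with h | h
          · exact h
          · exact absurd (h ▸ hz) hb
      · exact Or.inl ⟨hbA', a, hAsub ha, c, hAsub hc, hab, hbc⟩
    calc _ ≤ _ := Set.ncard_le_ncard hsub (Set.toFinite _)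
      _ ≤ _ := Set.ncard_union_le _ _
  have expand : ∀ (s : C → C → Prop) (B : Set C) (Q : Multiset (Set C)),
      profileCost costBC (B ::ₘ Q) s = costBC s B + profileCost costBC Q s := by
    intros; simp [profileCost]
  have hPeq : A ::ₘ P.erase A = P := Multiset.cons_erase hA
  refine ⟨hax, fun r' hr' => ?_⟩
  have h1 := hopt r' hr'
  rw [← hPeq, expand, expand] at h1
  rw [expand, expand, hzero]
  have := key r'
  omega
end

section
/- The Ballot Completion rule satisfies clearance: if candidate x is approved by no ballot of profile P and ◁ ∈ BC(P), then there is no ballot A ∈ P with y,z ∈ A and y ◁ x ◁ z. -/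
open scoped Classical

variable {C : Type*}

theorem bc_clearance [Fintype C] (P : Multiset (Set C)) (hP : ∀ B ∈ P, B.Nonempty)
    (x : C) (hx : ∀ A ∈ P, x ∉ A) (r : C → C → Prop) (hr : OptimalAxis costBC P r) :
    ¬ ∃ A ∈ P, ∃ y ∈ A, ∃ z ∈ A, r y x ∧ r x z := by
  rintro ⟨A₀, hA₀P, y, hy, z, hz, hyx, hxz⟩
  obtain ⟨⟨tot, htrans, irr⟩, hopt⟩ := hr
  set r' : C → C → Prop := fun a b => (a = x ∧ b ≠ x) ∨ (a ≠ x ∧ b ≠ x ∧ r a b) with hr'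
  have haxis' : IsAxis r' := by
    refine ⟨?_, ?_, ?_⟩
    · intro a b
      by_cases ha : a = x
      · by_cases hb : b = x
        · left; rw [ha, hb]
        · right; left; exact Or.inl ⟨ha, hb⟩
      · by_cases hb : b = x
        · right; right; exact Or.inl ⟨hb, ha⟩
        · rcases tot a b with h | h | h
          · left; exact h
          · right; left; exact Or.inr ⟨ha, hb, h⟩
          · right; right; exact Or.inr ⟨hb, ha, h⟩
    · rintro a b c (⟨ha, hb⟩ | ⟨ha, hb, hab⟩) (⟨hb', hc⟩ | ⟨hb', hc, hbc⟩)
      · exact absurd hb' hb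
      · exact Or.inl ⟨ha, hc⟩
      · exact absurd hb' hb
      · exact Or.inr ⟨ha, hc, htrans _ _ _ hab hbc⟩
    · rintro a (⟨h, h'⟩ | ⟨h, h', hra⟩)
      · exact h' h
      · exact irr a hra
  have hset : ∀ A ∈ P, {b : C | b ∉ A ∧ ∃ a ∈ A, ∃ c ∈ A, r' a b ∧ r' b c}
      = {b : C | b ∉ A ∧ ∃ a ∈ A, ∃ c ∈ A, r a b ∧ r b c} \ {x} := by
    intro A hAP
    ext b
    constructor
    · rintro ⟨hbA, a, haA, c, hcA, hab, hbc⟩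
      have hax : a ≠ x := fun h => hx A hAP (h ▸ haA)
      have hbx : b ≠ x := by
        rcases hab with ⟨h1, h2⟩ | ⟨h1, h2, h3⟩
        · exact absurd h1 hax
        · exact h2
      rcases hab with ⟨h1, _⟩ | ⟨_, _, rab⟩
      · exact absurd h1 hax
      rcases hbc with ⟨h1, _⟩ | ⟨_, _, rbc⟩
      · exact absurd h1 hbx
      exact ⟨⟨hbA, a, haA, c, hcA, rab, rbc⟩, hbx⟩
    · rintro ⟨⟨hbA, a, haA, c, hcA, rab, rbc⟩, hbx⟩
      have hbx' : b ≠ x := hbx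
      have hax : a ≠ x := fun h => hx A hAP (h ▸ haA)
      have hcx : c ≠ x := fun h => hx A hAP (h ▸ hcA)
      exact ⟨hbA, a, haA, c, hcA, Or.inr ⟨hax, hbx', rab⟩, Or.inr ⟨hbx', hcx, rbc⟩⟩
  have hle : ∀ A ∈ P, costBC r' A ≤ costBC r A := by
    intro A hAP
    unfold costBC
    rw [hset A hAP]
    exact Set.ncard_le_ncard Set.diff_subset (Set.toFinite _)
  have hlt : costBC r' A₀ < costBC r A₀ := by
    unfold costBC
    rw [hset A₀ hA₀P]
    have hxmem : x ∈ {b : C | b ∉ A₀ ∧ ∃ a ∈ A₀, ∃ c ∈ A₀, r a b ∧ r b c} :=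
      ⟨hx A₀ hA₀P, y, hy, z, hz, hyx, hxz⟩
    exact Set.ncard_diff_singleton_lt_of_mem hxmem (Set.toFinite _)
  have hsum : profileCost costBC P r' < profileCost costBC P r := by
    unfold profileCost
    exact Multiset.sum_lt_sum (fun A hA => hle A hA) ⟨A₀, hA₀P, hlt⟩
  have := hopt r' haxis'
  omega
end

section
/- The Forbidden Triples rule satisfies clearance: if candidate x is approved by no ballot of profile P and ◁ ∈ FT(P), then there is no ballot A ∈ P with y,z ∈ A and y ◁ x ◁ z. -/
open scoped Classical

variable {C : Type*}

theorem ft_clearance [Fintype C] (P : Multiset (Set C)) (hP : ∀ B ∈ P, B.Nonempty)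
    (x : C) (hx : ∀ A ∈ P, x ∉ A) (r : C → C → Prop) (hr : OptimalAxis costFT P r) :
    ¬ ∃ A ∈ P, ∃ y ∈ A, ∃ z ∈ A, r y x ∧ r x z := by
  rintro ⟨A, hA, y, hy, z, hz, hyx, hxz⟩
  obtain ⟨⟨htot, htrans, hirr⟩, hopt⟩ := hr
  set r' : C → C → Prop := fun a b => (b = x ∧ a ≠ x) ∨ (a ≠ x ∧ b ≠ x ∧ r a b) with hr'
  have hax' : IsAxis r' := by
    refine ⟨?_, ?_, ?_⟩
    · intro a b
      by_cases hab : a = b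
      · exact Or.inl hab
      right
      by_cases hbx : b = x
      · exact Or.inl (Or.inl ⟨hbx, fun h => hab (h.trans hbx.symm)⟩)
      by_cases haxx : a = x
      · exact Or.inr (Or.inl ⟨haxx, hbx⟩)
      rcases htot a b with h | h | h
      · exact absurd h hab
      · exact Or.inl (Or.inr ⟨haxx, hbx, h⟩)
      · exact Or.inr (Or.inr ⟨hbx, haxx, h⟩)
    · rintro a b c (⟨hb, ha⟩ | ⟨ha, hb, hab⟩) h2
      · exfalso; rcases h2 with ⟨_, hb'⟩ | ⟨hb', _⟩ <;> exact hb' hb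
      · rcases h2 with ⟨hc, _⟩ | ⟨_, hc, hbc⟩
        · exact Or.inl ⟨hc, ha⟩
        · exact Or.inr ⟨ha, hc, htrans a b c hab hbc⟩
    · rintro a (⟨h1, h2⟩ | ⟨_, _, h⟩)
      · exact h2 h1
      · exact hirr a h
  have hsub : ∀ B : Set C, x ∉ B →
      {t : C × C × C | t.1 ∈ B ∧ t.2.2 ∈ B ∧ t.2.1 ∉ B ∧ r' t.1 t.2.1 ∧ r' t.2.1 t.2.2} ⊆
      {t : C × C × C | t.1 ∈ B ∧ t.2.2 ∈ B ∧ t.2.1 ∉ B ∧ r t.1 t.2.1 ∧ r t.2.1 t.2.2} := by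
    rintro B hxB ⟨l, c, rr⟩ ⟨h1, h2, h3, h4, h5⟩
    have hcx : c ≠ x := by
      rcases h5 with ⟨_, hc⟩ | ⟨hc, _, _⟩ <;> exact hc
    have h4' : r l c := by
      rcases h4 with ⟨hc, _⟩ | ⟨_, _, h⟩
      · exact absurd hc hcx
      · exact h
    have h5' : r c rr := by
      rcases h5 with ⟨hrx, _⟩ | ⟨_, _, h⟩
      · exact absurd (hrx ▸ h2) hxB
      · exact h
    exact ⟨h1, h2, h3, h4', h5'⟩
  have hle : ∀ B ∈ P, costFT r' B ≤ costFT r B := by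
    intro B hB
    exact Set.ncard_le_ncard (hsub B (hx B hB)) (Set.toFinite _)
  have hxA : x ∉ A := hx A hA
  have hlt : costFT r' A < costFT r A := by
    apply Set.ncard_lt_ncard _ (Set.toFinite _)
    constructor
    · exact hsub A hxA
    · intro hss
      have : ((y, x, z) : C × C × C) ∈
          {t : C × C × C | t.1 ∈ A ∧ t.2.2 ∈ A ∧ t.2.1 ∉ A ∧ r' t.1 t.2.1 ∧ r' t.2.1 t.2.2} :=
        hss ⟨hy, hz, hxA, hyx, hxz⟩
      rcases this.2.2.2.2 with ⟨_, hc⟩ | ⟨hc, _, _⟩ <;> exact hc rfl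
  obtain ⟨Q, rfl⟩ := Multiset.exists_cons_of_mem hA
  have hQ : (Q.map (costFT r')).sum ≤ (Q.map (costFT r)).sum := by
    apply Multiset.sum_map_le_sum_map
    intro B hB
    exact hle B (Multiset.mem_cons_of_mem hB)
  have hstrict : profileCost costFT (A ::ₘ Q) r' < profileCost costFT (A ::ₘ Q) r := by
    simp only [profileCost, Multiset.map_cons, Multiset.sum_cons]
    exact Nat.add_lt_add_of_lt_of_le hlt hQ
  exact absurd (hopt r' hax') (not_le.mpr hstrict)
end

section
/- The Voter Deletion rule fails clearance: for C = {a,b,c,d,e} and the profile P = ({a,b},{a,c},{a,d}), the axis b ◁ a ◁ c ◁ e ◁ d is VD-optimal, yet the never-approved candidate e lies strictly between a and d, both of which belong to the ballot {a,d}. -/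
open scoped Classical

variable {C : Type*}

/-- Positions for the axis `b ◁ a ◁ c ◁ e ◁ d` on candidates
`a = 0, b = 1, c = 2, d = 3, e = 4`. -/
noncomputable def vdAxis : Fin 5 → Fin 5 → Prop :=
  fun x y => (![1, 0, 2, 4, 3] : Fin 5 → Fin 5) x < ![1, 0, 2, 4, 3] y


instance decVdAxis : DecidableRel vdAxis := fun x y =>
  inferInstanceAs (Decidable ((![1, 0, 2, 4, 3] : Fin 5 → Fin 5) x < ![1, 0, 2, 4, 3] y))
lemma vdAxis_isAxis : IsAxis vdAxis := by
  unfold IsAxis vdAxis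
  refine ⟨?_, ?_, ?_⟩ <;> decide

lemma iteZero {p : Prop} [Decidable p] (h : (if p then 0 else 1) = (0 : ℕ)) : p := by
  by_cases hp : p
  · exact hp
  · simp [hp] at h

lemma I01 : IsInterval vdAxis ({0, 1} : Set (Fin 5)) := by
  intro a ha b hb c h1 h2
  simp only [Set.mem_insert_iff, Set.mem_singleton_iff] at *
  exact (by decide : ∀ a b c : Fin 5, (a = 0 ∨ a = 1) → (b = 0 ∨ b = 1) → vdAxis a c →
    vdAxis c b → (c = 0 ∨ c = 1)) a b c ha hb h1 h2

lemma I02 : IsInterval vdAxis ({0, 2} : Set (Fin 5)) := by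
  intro a ha b hb c h1 h2
  simp only [Set.mem_insert_iff, Set.mem_singleton_iff] at *
  exact (by decide : ∀ a b c : Fin 5, (a = 0 ∨ a = 2) → (b = 0 ∨ b = 2) → vdAxis a c →
    vdAxis c b → (c = 0 ∨ c = 2)) a b c ha hb h1 h2

lemma notI03 : ¬ IsInterval vdAxis ({0, 3} : Set (Fin 5)) := by
  intro h
  have := h 0 (by simp) 3 (by simp) 2 (by decide) (by decide)
  simp only [Set.mem_insert_iff, Set.mem_singleton_iff] at this
  rcases this with h' | h' <;> exact absurd h' (by decide)

lemma not_all_intervals (r : Fin 5 → Fin 5 → Prop) (hr : IsAxis r) :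
    ¬ (IsInterval r ({0, 1} : Set (Fin 5)) ∧ IsInterval r ({0, 2} : Set (Fin 5)) ∧
       IsInterval r ({0, 3} : Set (Fin 5))) := by
  obtain ⟨tot, trans, irr⟩ := hr
  rintro ⟨h1, h2, h3⟩
  have up : ∀ x y : Fin 5, x ≠ y → x ≠ 0 → y ≠ 0 → r 0 x → r 0 y →
      IsInterval r {0, x} → IsInterval r {0, y} → False := by
    intro x y hxy hx0 hy0 hx hy hIx hIy
    rcases tot x y with h | h | h
    · exact hxy h
    · have := hIy 0 (by simp) y (by simp) x hx h
      simp only [Set.mem_insert_iff, Set.mem_singleton_iff] at this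
      rcases this with h' | h'
      · exact hx0 h'
      · exact hxy h'
    · have := hIx 0 (by simp) x (by simp) y hy h
      simp only [Set.mem_insert_iff, Set.mem_singleton_iff] at this
      rcases this with h' | h'
      · exact hy0 h'
      · exact hxy h'.symm
  have down : ∀ x y : Fin 5, x ≠ y → x ≠ 0 → y ≠ 0 → r x 0 → r y 0 →
      IsInterval r {0, x} → IsInterval r {0, y} → False := by
    intro x y hxy hx0 hy0 hx hy hIx hIy
    rcases tot x y with h | h | h
    · exact hxy h
    · have := hIx x (by simp) 0 (by simp) y h hy
      simp only [Set.mem_insert_iff, Set.mem_singleton_iff] at this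
      rcases this with h' | h'
      · exact hy0 h'
      · exact hxy h'.symm
    · have := hIy y (by simp) 0 (by simp) x h hx
      simp only [Set.mem_insert_iff, Set.mem_singleton_iff] at this
      rcases this with h' | h'
      · exact hx0 h'
      · exact hxy h'
  rcases tot 0 1 with e | u1 | d1
  · exact absurd e (by decide)
  · rcases tot 0 2 with e | u2 | d2
    · exact absurd e (by decide)
    · exact up 1 2 (by decide) (by decide) (by decide) u1 u2 h1 h2
    · rcases tot 0 3 with e | u3 | d3
      · exact absurd e (by decide)
      · exact up 1 3 (by decide) (by decide) (by decide) u1 u3 h1 h3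
      · exact down 2 3 (by decide) (by decide) (by decide) d2 d3 h2 h3
  · rcases tot 0 2 with e | u2 | d2
    · exact absurd e (by decide)
    · rcases tot 0 3 with e | u3 | d3
      · exact absurd e (by decide)
      · exact up 2 3 (by decide) (by decide) (by decide) u2 u3 h2 h3
      · exact down 1 3 (by decide) (by decide) (by decide) d1 d3 h1 h3
    · exact down 1 2 (by decide) (by decide) (by decide) d1 d2 h1 h2

theorem vd_fails_clearance :
    OptimalAxis costVD ({({0, 1} : Set (Fin 5)), {0, 2}, {0, 3}} : Multiset (Set (Fin 5))) vdAxis ∧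
    (∀ A ∈ ({({0, 1} : Set (Fin 5)), {0, 2}, {0, 3}} : Multiset (Set (Fin 5))), (4 : Fin 5) ∉ A) ∧
    ({0, 3} : Set (Fin 5)) ∈ ({({0, 1} : Set (Fin 5)), {0, 2}, {0, 3}} : Multiset (Set (Fin 5))) ∧
    (0 : Fin 5) ∈ ({0, 3} : Set (Fin 5)) ∧ (3 : Fin 5) ∈ ({0, 3} : Set (Fin 5)) ∧
    vdAxis 0 4 ∧ vdAxis 4 3 := by
  refine ⟨⟨vdAxis_isAxis, ?_⟩, ?_, ?_, by simp, by simp, by decide, by decide⟩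
  · intro r' hr'
    have hc : profileCost costVD
        ({({0, 1} : Set (Fin 5)), {0, 2}, {0, 3}} : Multiset (Set (Fin 5))) vdAxis = 1 := by
      simp [profileCost, costVD, I01, I02, notI03]
    rw [hc]
    by_contra hlt
    push_neg at hlt
    have h0 := Nat.lt_one_iff.mp hlt
    simp only [profileCost, Multiset.insert_eq_cons, Multiset.map_cons, Multiset.map_singleton,
      Multiset.sum_cons, Multiset.sum_singleton, costVD, Nat.add_eq_zero] at h0
    exact not_all_intervals r' hr' ⟨iteZero h0.1, iteZero h0.2.1, iteZero h0.2.2⟩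
  · intro A hA
    simp only [Multiset.insert_eq_cons, Multiset.mem_cons, Multiset.mem_singleton] at hA
    rcases hA with rfl | rfl | rfl <;>
      simp only [Set.mem_insert_iff, Set.mem_singleton_iff, not_or] <;> exact ⟨by decide, by decide⟩
  · simp only [Multiset.insert_eq_cons, Multiset.mem_cons, Multiset.mem_singleton]
    tauto
end

section
/- The Forbidden Triples rule satisfies clone-proximity: if a and a' are clones in profile P (every ballot contains a iff it contains a'), ◁ ∈ FT(P), and some candidate x satisfies a ◁ x ◁ a' or a' ◁ x ◁ a, then every ballot A ∈ P containing both a and a' also contains x. -/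
open scoped Classical

variable {C : Type*}

section FTaux
open Finset

lemma ftFc_congr [Fintype C] (p q : C → Prop) [DecidablePred p] [DecidablePred q] (h : ∀ l, p l ↔ q l) :
    (univ.filter p).card = (univ.filter q).card := by
  have : univ.filter p = univ.filter q := by
    ext l; simp only [mem_filter, mem_univ, true_and]; exact h l
  rw [this]

lemma ftFc_succ [Fintype C] (w : C) (p q : C → Prop) [DecidablePred p] [DecidablePred q] (h : ∀ l, l ≠ w → (p l ↔ q l))
    (hp : p w) (hq : ¬ q w) :
    (univ.filter p).card = (univ.filter q).card + 1 := by
  have hins : univ.filter p = insert w (univ.filter q) := by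
    ext l; simp only [mem_filter, mem_univ, true_and, mem_insert]
    by_cases hl : l = w
    · subst hl; simp [hp]
    · rw [h l hl]; simp [hl]
  rw [hins, card_insert_of_notMem (by simp [hq])]

noncomputable def ftFP [Fintype C] (s : C → C → Prop) (A : Set C) (c : C) : ℕ :=
  (univ.filter fun l => l ∈ A ∧ s l c).card * (univ.filter fun l => l ∈ A ∧ s c l).card

lemma ftFP_congr2 [Fintype C] (s t : C → C → Prop) (A : Set C) (c d : C)
    (hL : ∀ l ∈ A, (s l c ↔ t l d)) (hR : ∀ l ∈ A, (s c l ↔ t d l)) :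
    ftFP s A c = ftFP t A d := by
  unfold ftFP; congr 1
  · exact ftFc_congr _ _ fun l => and_congr_right fun hl => hL l hl
  · exact ftFc_congr _ _ fun l => and_congr_right fun hl => hR l hl

lemma ftCost_eq [Fintype C] (s : C → C → Prop) (A : Set C) :
    costFT s A = ∑ c : C, if c ∈ A then 0 else ftFP s A c := by
  classical
  have h1 : {t : C × C × C | t.1 ∈ A ∧ t.2.2 ∈ A ∧ t.2.1 ∉ A ∧ s t.1 t.2.1 ∧ s t.2.1 t.2.2}
      = ↑(univ.filter fun t : C × C × C =>
          t.1 ∈ A ∧ t.2.2 ∈ A ∧ t.2.1 ∉ A ∧ s t.1 t.2.1 ∧ s t.2.1 t.2.2) := by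
    ext t; simp
  rw [costFT, h1, Set.ncard_coe_finset]
  rw [Finset.card_eq_sum_card_fiberwise
    (f := fun t : C × C × C => t.2.1) (t := univ) (fun t _ => mem_univ _)]
  refine Finset.sum_congr rfl fun c _ => ?_
  rw [Finset.filter_filter]
  by_cases hc : c ∈ A
  · rw [if_pos hc, Finset.card_eq_zero]
    ext t
    simp only [mem_filter, mem_univ, true_and, notMem_empty, iff_false, not_and]
    rintro ⟨_, _, h3, _, _⟩ h6
    exact absurd (h6 ▸ hc) h3
  · rw [if_neg hc, ftFP, ← Finset.card_product]
    refine Finset.card_bij' (fun t _ => (t.1, t.2.2)) (fun p _ => (p.1, c, p.2)) ?_ ?_ ?_ ?_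
    · rintro ⟨l, m, rr⟩ ht
      simp only [mem_filter, mem_univ, true_and] at ht
      obtain ⟨⟨hl, hrr, hm, hlm, hmr⟩, hmc⟩ := ht
      subst hmc
      simp only [mem_product, mem_filter, mem_univ, true_and]
      exact ⟨⟨hl, hlm⟩, hrr, hmr⟩
    · rintro ⟨l, rr⟩ hp
      simp only [mem_product, mem_filter, mem_univ, true_and] at hp
      simp only [mem_filter, mem_univ, true_and]
      exact ⟨⟨hp.1.1, hp.2.1, hc, hp.1.2, hp.2.2⟩, trivial⟩
    · rintro ⟨l, m, rr⟩ ht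
      simp only [mem_filter, mem_univ, true_and] at ht
      simp [ht.2]
    · rintro ⟨l, rr⟩ _; rfl

noncomputable def ftRk [Fintype C] (r : C → C → Prop) (c : C) : ℕ :=
  (univ.filter fun y => r y c).card

lemma ftRk_lt [Fintype C] {r : C → C → Prop} (hr : IsAxis r) {u v : C} (h : r u v) :
    ftRk r u < ftRk r v := by
  obtain ⟨htot, htrans, hirr⟩ := hr
  apply Finset.card_lt_card
  rw [Finset.ssubset_iff_of_subset]
  · exact ⟨u, by simp [h], by simp [hirr u]⟩
  · intro y hy
    simp only [mem_filter, mem_univ, true_and] at *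
    exact htrans _ _ _ hy h

lemma ftRk_iff [Fintype C] {r : C → C → Prop} (hr : IsAxis r) (u v : C) :
    r u v ↔ ftRk r u < ftRk r v := by
  constructor
  · exact ftRk_lt hr
  · intro h
    rcases hr.1 u v with h' | h' | h'
    · subst h'; omega
    · exact h'
    · have := ftRk_lt hr h'; omega

end FTaux

section FTmain
open Finset

noncomputable def ftKey1 (n : C → ℕ) (a a' : C) (u : C) : ℕ := if u = a' then 2 * n a + 1 else 2 * n u
noncomputable def ftKey2 (n : C → ℕ) (a a' : C) (u : C) : ℕ := if u = a then 2 * n a' else 2 * n u + 1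
def ftRel (k : C → ℕ) (u v : C) : Prop := k u < k v

lemma ftRel_axis (k : C → ℕ) (hk : ∀ u v : C, k u = k v → u = v) : IsAxis (ftRel k) := by
  refine ⟨fun u v => ?_, fun x y z h1 h2 => Nat.lt_trans h1 h2, fun u => Nat.lt_irrefl _⟩
  rcases Nat.lt_trichotomy (k u) (k v) with h | h | h
  · exact Or.inr (Or.inl h)
  · exact Or.inl (hk u v h)
  · exact Or.inr (Or.inr h)

lemma ftMsum {α : Type*} (f g : α → ℕ) :
    ∀ Q : Multiset α, (∀ A ∈ Q, f A ≤ g A) → (Q.map f).sum ≤ (Q.map g).sum := by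
  intro Q
  induction Q using Multiset.induction_on with
  | empty => intro _; simp
  | cons a s ih =>
      intro h
      simp only [Multiset.map_cons, Multiset.sum_cons]
      exact Nat.add_le_add (h a (Multiset.mem_cons_self a s))
        (ih fun b hb => h b (Multiset.mem_cons_of_mem hb))

lemma ftBallot [Fintype C] (r : C → C → Prop) (hr : IsAxis r) (a a' x : C)
    (hax : r a x) (hxa : r x a') (A : Set C) (hA : a ∈ A ↔ a' ∈ A) :
    costFT (ftRel (ftKey1 (ftRk r) a a')) A + costFT (ftRel (ftKey2 (ftRk r) a a')) A
      + (if a ∈ A ∧ x ∉ A then 2 else 0) ≤ 2 * costFT r A := by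
  classical
  set n := ftRk r with hn
  have hrank : ∀ u v, r u v ↔ n u < n v := fun u v => ftRk_iff hr u v
  obtain ⟨htot, htrans, hirr⟩ := hr
  have ninj : ∀ u v : C, n u = n v → u = v := by
    intro u v h
    rcases htot u v with h' | h' | h'
    · exact h'
    · rw [hrank] at h'; omega
    · rw [hrank] at h'; omega
  have hnax : n a < n x := (hrank _ _).mp hax
  have hnxa : n x < n a' := (hrank _ _).mp hxa
  have haa' : a ≠ a' := by intro h; rw [h] at hnax; omega
  have hxna : x ≠ a := by intro h; rw [h] at hnax; omega
  have hxna' : x ≠ a' := by intro h; rw [h] at hnxa; omega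
  set r1 := ftRel (ftKey1 n a a') with hr1
  set r2 := ftRel (ftKey2 n a a') with hr2
  have q1 : ∀ l c : C, l ≠ a' → c ≠ a' → (r1 l c ↔ r l c) := by
    intro l c h1 h2
    rw [hr1, hrank]; simp only [ftRel, ftKey1]; rw [if_neg h1, if_neg h2]; omega
  have q1l : ∀ c : C, c ≠ a' → (r1 a' c ↔ n a < n c) := by
    intro c h; rw [hr1]; simp only [ftRel, ftKey1]; rw [if_neg h]; simp only [if_true]; omega
  have q1r : ∀ c : C, c ≠ a' → (r1 c a' ↔ n c ≤ n a) := by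
    intro c h; rw [hr1]; simp only [ftRel, ftKey1]; rw [if_neg h]; simp only [if_true]; omega
  have q2 : ∀ l c : C, l ≠ a → c ≠ a → (r2 l c ↔ r l c) := by
    intro l c h1 h2
    rw [hr2, hrank]; simp only [ftRel, ftKey2]; rw [if_neg h1, if_neg h2]; omega
  have q2l : ∀ c : C, c ≠ a → (r2 a c ↔ n a' ≤ n c) := by
    intro c h; rw [hr2]; simp only [ftRel, ftKey2]; rw [if_neg h]; simp only [if_true]; omega
  have q2r : ∀ c : C, c ≠ a → (r2 c a ↔ n c < n a') := by
    intro c h; rw [hr2]; simp only [ftRel, ftKey2]; rw [if_neg h]; simp only [if_true]; omega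
  -- the strict between case
  have hbet : ∀ c : C, c ∉ A → a ∈ A → n a < n c → n c < n a' →
      ftFP r1 A c + ftFP r2 A c + 2 = 2 * ftFP r A c := by
    intro c hcA haA hac hca'
    have ha'A : a' ∈ A := hA.1 haA
    have hca : c ≠ a := by intro h; rw [h] at hac; omega
    have hcaa : c ≠ a' := by intro h; rw [h] at hca'; omega
    have e1 : (univ.filter fun l => l ∈ A ∧ r1 l c).card
        = (univ.filter fun l => l ∈ A ∧ r l c).card + 1 := by
      apply ftFc_succ a'
      · intro l hl; exact and_congr_right fun _ => q1 l c hl hcaa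
      · exact ⟨ha'A, (q1l c hcaa).mpr hac⟩
      · rintro ⟨-, h⟩; rw [hrank] at h; omega
    have e2 : (univ.filter fun l => l ∈ A ∧ r c l).card
        = (univ.filter fun l => l ∈ A ∧ r1 c l).card + 1 := by
      apply ftFc_succ a'
      · intro l hl; exact and_congr_right fun _ => (q1 c l hcaa hl).symm
      · exact ⟨ha'A, (hrank c a').mpr hca'⟩
      · rintro ⟨-, h⟩; rw [q1r c hcaa] at h; omega
    have e3 : (univ.filter fun l => l ∈ A ∧ r l c).card
        = (univ.filter fun l => l ∈ A ∧ r2 l c).card + 1 := by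
      apply ftFc_succ a
      · intro l hl; exact and_congr_right fun _ => (q2 l c hl hca).symm
      · exact ⟨haA, (hrank a c).mpr hac⟩
      · rintro ⟨-, h⟩; rw [q2l c hca] at h; omega
    have e4 : (univ.filter fun l => l ∈ A ∧ r2 c l).card
        = (univ.filter fun l => l ∈ A ∧ r c l).card + 1 := by
      apply ftFc_succ a
      · intro l hl; exact and_congr_right fun _ => q2 c l hca hl
      · exact ⟨haA, (q2r c hca).mpr hca'⟩
      · rintro ⟨-, h⟩; rw [hrank] at h; omega
    unfold ftFP
    rw [e1, e4, e2, e3]; ring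
  -- the non-strict comparison away from a, a'
  have hle : ∀ c : C, c ≠ a → c ≠ a' → c ∉ A →
      ftFP r1 A c + ftFP r2 A c ≤ 2 * ftFP r A c := by
    intro c hca hca' hcA
    by_cases haA : a ∈ A
    · have ha'A : a' ∈ A := hA.1 haA
      have hna : n c ≠ n a := fun h => hca (ninj _ _ h)
      have hna' : n c ≠ n a' := fun h => hca' (ninj _ _ h)
      by_cases hbetw : n a < n c ∧ n c < n a'
      · have := hbet c hcA haA hbetw.1 hbetw.2; omega
      · have hside : (n c < n a ∧ n c < n a') ∨ (n a < n c ∧ n a' < n c) := by omega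
        have e1 : ftFP r1 A c = ftFP r A c := by
          apply ftFP_congr2
          · intro l hl
            by_cases hla' : l = a'
            · subst hla'; rw [q1l c hca', hrank]
              rcases hside with ⟨h1, h2⟩ | ⟨h1, h2⟩ <;> omega
            · exact q1 l c hla' hca'
          · intro l hl
            by_cases hla' : l = a'
            · subst hla'; rw [q1r c hca', hrank]
              rcases hside with ⟨h1, h2⟩ | ⟨h1, h2⟩ <;> omega
            · exact q1 c l hca' hla'
        have e2 : ftFP r2 A c = ftFP r A c := by
          apply ftFP_congr2
          · intro l hl
            by_cases hla : l = a
            · subst hla; rw [q2l c hca, hrank]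
              rcases hside with ⟨h1, h2⟩ | ⟨h1, h2⟩ <;> omega
            · exact q2 l c hla hca
          · intro l hl
            by_cases hla : l = a
            · subst hla; rw [q2r c hca, hrank]
              rcases hside with ⟨h1, h2⟩ | ⟨h1, h2⟩ <;> omega
            · exact q2 c l hca hla
        omega
    · have ha'A : a' ∉ A := fun h => haA (hA.2 h)
      have e1 : ftFP r1 A c = ftFP r A c := by
        apply ftFP_congr2
        · intro l hl; exact q1 l c (fun h => ha'A (h ▸ hl)) hca'
        · intro l hl; exact q1 c l hca' (fun h => ha'A (h ▸ hl))
      have e2 : ftFP r2 A c = ftFP r A c := by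
        apply ftFP_congr2
        · intro l hl; exact q2 l c (fun h => haA (h ▸ hl)) hca
        · intro l hl; exact q2 c l hca (fun h => haA (h ▸ hl))
      omega
  -- the two distinguished positions a and a'
  have hpair : (if a ∈ A then 0 else ftFP r1 A a) + (if a ∈ A then 0 else ftFP r2 A a)
      + (if a' ∈ A then 0 else ftFP r1 A a') + (if a' ∈ A then 0 else ftFP r2 A a')
      ≤ 2 * (if a ∈ A then 0 else ftFP r A a) + 2 * (if a' ∈ A then 0 else ftFP r A a') := by
    by_cases haA : a ∈ A
    · simp [haA, hA.1 haA]
    · have ha'A : a' ∉ A := fun h => haA (hA.2 h)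
      rw [if_neg haA, if_neg haA, if_neg ha'A, if_neg ha'A, if_neg haA, if_neg ha'A]
      have p1 : ftFP r1 A a = ftFP r A a := by
        apply ftFP_congr2
        · intro l hl; exact q1 l a (fun h => ha'A (h ▸ hl)) haa'
        · intro l hl; exact q1 a l haa' (fun h => ha'A (h ▸ hl))
      have p2 : ftFP r2 A a = ftFP r A a' := by
        apply ftFP_congr2
        · intro l hl
          have hla : l ≠ a := fun h => haA (h ▸ hl)
          rw [q2r l hla, hrank]
        · intro l hl
          have hla : l ≠ a := fun h => haA (h ▸ hl)
          have hla' : l ≠ a' := fun h => ha'A (h ▸ hl)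
          rw [q2l l hla, hrank]
          have : n l ≠ n a' := fun h => hla' (ninj _ _ h)
          omega
      have p3 : ftFP r1 A a' = ftFP r A a := by
        apply ftFP_congr2
        · intro l hl
          have hla : l ≠ a := fun h => haA (h ▸ hl)
          have hla' : l ≠ a' := fun h => ha'A (h ▸ hl)
          rw [q1r l hla', hrank]
          have : n l ≠ n a := fun h => hla (ninj _ _ h)
          omega
        · intro l hl
          have hla' : l ≠ a' := fun h => ha'A (h ▸ hl)
          rw [q1l l hla', hrank]
      have p4 : ftFP r2 A a' = ftFP r A a' := by
        apply ftFP_congr2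
        · intro l hl; exact q2 l a' (fun h => haA (h ▸ hl)) (Ne.symm haa')
        · intro l hl; exact q2 a' l (Ne.symm haa') (fun h => haA (h ▸ hl))
      rw [p1, p2, p3, p4]; omega
  -- assemble the sums
  rw [ftCost_eq r1 A, ftCost_eq r2 A, ftCost_eq r A]
  have hsum1 : ∑ c : C, (if c ∈ A then 0 else ftFP r1 A c)
      = (if a ∈ A then 0 else ftFP r1 A a) + ((if a' ∈ A then 0 else ftFP r1 A a')
        + ∑ c ∈ (univ.erase a).erase a', (if c ∈ A then 0 else ftFP r1 A c)) := by
    rw [← Finset.add_sum_erase _ _ (mem_univ a),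
      ← Finset.add_sum_erase _ _ (Finset.mem_erase.mpr ⟨Ne.symm haa', mem_univ a'⟩)]
  have hsum2 : ∑ c : C, (if c ∈ A then 0 else ftFP r2 A c)
      = (if a ∈ A then 0 else ftFP r2 A a) + ((if a' ∈ A then 0 else ftFP r2 A a')
        + ∑ c ∈ (univ.erase a).erase a', (if c ∈ A then 0 else ftFP r2 A c)) := by
    rw [← Finset.add_sum_erase _ _ (mem_univ a),
      ← Finset.add_sum_erase _ _ (Finset.mem_erase.mpr ⟨Ne.symm haa', mem_univ a'⟩)]
  have hsum3 : ∑ c : C, (if c ∈ A then 0 else ftFP r A c)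
      = (if a ∈ A then 0 else ftFP r A a) + ((if a' ∈ A then 0 else ftFP r A a')
        + ∑ c ∈ (univ.erase a).erase a', (if c ∈ A then 0 else ftFP r A c)) := by
    rw [← Finset.add_sum_erase _ _ (mem_univ a),
      ← Finset.add_sum_erase _ _ (Finset.mem_erase.mpr ⟨Ne.symm haa', mem_univ a'⟩)]
  rw [hsum1, hsum2, hsum3]
  have hterm : ∀ c ∈ (univ.erase a).erase a',
      (if c ∈ A then 0 else ftFP r1 A c) + (if c ∈ A then 0 else ftFP r2 A c)
        ≤ 2 * (if c ∈ A then 0 else ftFP r A c) := by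
    intro c hc
    simp only [Finset.mem_erase, Finset.mem_univ, and_true] at hc
    by_cases hcA : c ∈ A
    · simp [hcA]
    · rw [if_neg hcA, if_neg hcA, if_neg hcA]; exact hle c hc.2 hc.1 hcA
  have hS : ∑ c ∈ (univ.erase a).erase a',
        ((if c ∈ A then 0 else ftFP r1 A c) + (if c ∈ A then 0 else ftFP r2 A c))
      + (if a ∈ A ∧ x ∉ A then 2 else 0)
      ≤ ∑ c ∈ (univ.erase a).erase a', 2 * (if c ∈ A then 0 else ftFP r A c) := by
    by_cases hE : a ∈ A ∧ x ∉ A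
    · have hxs : x ∈ (univ.erase a).erase a' :=
        mem_erase.mpr ⟨hxna', mem_erase.mpr ⟨hxna, mem_univ x⟩⟩
      have hx2 : (if x ∈ A then 0 else ftFP r1 A x) + (if x ∈ A then 0 else ftFP r2 A x) + 2
          = 2 * (if x ∈ A then 0 else ftFP r A x) := by
        rw [if_neg hE.2, if_neg hE.2, if_neg hE.2]
        exact hbet x hE.2 hE.1 hnax hnxa
      have hsplitL : ∑ c ∈ (univ.erase a).erase a',
            ((if c ∈ A then 0 else ftFP r1 A c) + (if c ∈ A then 0 else ftFP r2 A c))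
          = ((if x ∈ A then 0 else ftFP r1 A x) + (if x ∈ A then 0 else ftFP r2 A x))
            + ∑ c ∈ ((univ.erase a).erase a').erase x,
              ((if c ∈ A then 0 else ftFP r1 A c) + (if c ∈ A then 0 else ftFP r2 A c)) :=
        (Finset.add_sum_erase _ _ hxs).symm
      have hsplitR : ∑ c ∈ (univ.erase a).erase a', 2 * (if c ∈ A then 0 else ftFP r A c)
          = 2 * (if x ∈ A then 0 else ftFP r A x)
            + ∑ c ∈ ((univ.erase a).erase a').erase x,
              2 * (if c ∈ A then 0 else ftFP r A c) :=
        (Finset.add_sum_erase _ _ hxs).symm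
      have hrest : ∑ c ∈ ((univ.erase a).erase a').erase x,
            ((if c ∈ A then 0 else ftFP r1 A c) + (if c ∈ A then 0 else ftFP r2 A c))
          ≤ ∑ c ∈ ((univ.erase a).erase a').erase x,
            2 * (if c ∈ A then 0 else ftFP r A c) :=
        Finset.sum_le_sum fun c hc => hterm c (Finset.mem_of_mem_erase hc)
      rw [if_pos hE, hsplitL, hsplitR]
      omega
    · rw [if_neg hE]
      have := Finset.sum_le_sum hterm
      omega
  have hdistr : ∑ c ∈ (univ.erase a).erase a',
        ((if c ∈ A then 0 else ftFP r1 A c) + (if c ∈ A then 0 else ftFP r2 A c))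
      = ∑ c ∈ (univ.erase a).erase a', (if c ∈ A then 0 else ftFP r1 A c)
        + ∑ c ∈ (univ.erase a).erase a', (if c ∈ A then 0 else ftFP r2 A c) :=
    Finset.sum_add_distrib
  have hmul : ∑ c ∈ (univ.erase a).erase a', 2 * (if c ∈ A then 0 else ftFP r A c)
      = 2 * ∑ c ∈ (univ.erase a).erase a', (if c ∈ A then 0 else ftFP r A c) :=
    (Finset.mul_sum _ _ _).symm
  omega

lemma ftKeyLemma [Fintype C] (P : Multiset (Set C))
    (a a' : C) (hcl : ∀ A ∈ P, a ∈ A ↔ a' ∈ A)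
    (r : C → C → Prop) (hr : OptimalAxis costFT P r)
    (x : C) (hax : r a x) (hxa : r x a')
    (A₀ : Set C) (hA₀ : A₀ ∈ P) (haA : a ∈ A₀) (hxA : x ∉ A₀) : False := by
  classical
  obtain ⟨haxis, hopt⟩ := hr
  have ninjN : ∀ u v : C, ftRk r u = ftRk r v → u = v := by
    intro u v h
    rcases haxis.1 u v with h' | h' | h'
    · exact h'
    · have := ftRk_lt haxis h'; omega
    · have := ftRk_lt haxis h'; omega
  have hk1 : ∀ u v : C, ftKey1 (ftRk r) a a' u = ftKey1 (ftRk r) a a' v → u = v := by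
    intro u v h
    simp only [ftKey1] at h
    split_ifs at h with hu hv hv
    · exact hu.trans hv.symm
    · omega
    · omega
    · exact ninjN u v (by omega)
  have hk2 : ∀ u v : C, ftKey2 (ftRk r) a a' u = ftKey2 (ftRk r) a a' v → u = v := by
    intro u v h
    simp only [ftKey2] at h
    split_ifs at h with hu hv hv
    · exact hu.trans hv.symm
    · omega
    · omega
    · exact ninjN u v (by omega)
  have ax1 : IsAxis (ftRel (ftKey1 (ftRk r) a a')) := ftRel_axis _ hk1
  have ax2 : IsAxis (ftRel (ftKey2 (ftRk r) a a')) := ftRel_axis _ hk2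
  have h1 := hopt _ ax1
  have h2 := hopt _ ax2
  obtain ⟨P', hP'⟩ := Multiset.exists_cons_of_mem hA₀
  have hball : ∀ A ∈ P, costFT (ftRel (ftKey1 (ftRk r) a a')) A
      + costFT (ftRel (ftKey2 (ftRk r) a a')) A
      + (if a ∈ A ∧ x ∉ A then 2 else 0) ≤ 2 * costFT r A :=
    fun A hAm => ftBallot r haxis a a' x hax hxa A (hcl A hAm)
  have hstrict : profileCost costFT P (ftRel (ftKey1 (ftRk r) a a'))
      + profileCost costFT P (ftRel (ftKey2 (ftRk r) a a'))
      < 2 * profileCost costFT P r := by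
    have hA0 := hball A₀ hA₀
    rw [if_pos ⟨haA, hxA⟩] at hA0
    have hQ : (P'.map (costFT (ftRel (ftKey1 (ftRk r) a a')))).sum
        + (P'.map (costFT (ftRel (ftKey2 (ftRk r) a a')))).sum
        ≤ 2 * (P'.map (costFT r)).sum := by
      rw [← Multiset.sum_map_add, ← Multiset.sum_map_mul_left]
      apply ftMsum
      intro B hB
      have hBP : B ∈ P := by rw [hP']; exact Multiset.mem_cons_of_mem hB
      have := hball B hBP
      omega
    rw [hP']
    simp only [profileCost, Multiset.map_cons, Multiset.sum_cons]
    omega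
  omega

end FTmain

theorem ft_clone_proximity [Fintype C] (P : Multiset (Set C)) (hP : ∀ B ∈ P, B.Nonempty)
    (a a' : C) (hcl : ∀ A ∈ P, a ∈ A ↔ a' ∈ A)
    (r : C → C → Prop) (hr : OptimalAxis costFT P r)
    (x : C) (hx : (r a x ∧ r x a') ∨ (r a' x ∧ r x a)) :
    ∀ A ∈ P, a ∈ A → a' ∈ A → x ∈ A := by
  intro A hA haA ha'A
  by_contra hxA
  rcases hx with ⟨h1, h2⟩ | ⟨h1, h2⟩
  · exact ftKeyLemma P a a' hcl r hr x h1 h2 A hA haA hxA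
  · exact ftKeyLemma P a' a (fun B hB => (hcl B hB).symm) r hr x h1 h2 A hA ha'A hxA
end

section
/- The Voter Deletion rule is resistant to cloning: if a and a' are clones in profile P, then (1) for every ◁ ∈ VD(P), the restriction of ◁ to C∖{a} is VD-optimal for the restricted profile P_{−a}, and (2) for every ◁* that is VD-optimal for P_{−a}, there exists ◁ ∈ VD(P) whose restriction to C∖{a} equals ◁*. -/
open scoped Classical

variable {C : Type*}

section CloneAux

variable {C : Type*}

/-- Map each candidate to itself, except `a` which maps to `a'`. -/
noncomputable def clonePhi (a a' : C) (hne : a' ≠ a) (x : C) : {c : C // c ≠ a} :=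
  if h : x = a then ⟨a', hne⟩ else ⟨x, h⟩

/-- Extend an axis on `C ∖ {a}` to `C` by placing `a` immediately before `a'`. -/
noncomputable def cloneExt (a a' : C) (hne : a' ≠ a)
    (s : {c : C // c ≠ a} → {c : C // c ≠ a} → Prop) (x y : C) : Prop :=
  s (clonePhi a a' hne x) (clonePhi a a' hne y) ∨ (x = a ∧ y = a')

variable {a a' : C} {hne : a' ≠ a}

lemma clonePhi_ne {x : C} (hx : x ≠ a) : clonePhi a a' hne x = ⟨x, hx⟩ := dif_neg hx

lemma clonePhi_a : clonePhi a a' hne a = ⟨a', hne⟩ := dif_pos rfl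

lemma clonePhi_coe (x : {c : C // c ≠ a}) : clonePhi a a' hne (x : C) = x := by
  rw [clonePhi_ne x.2]

lemma clonePhi_mem {A : Set C} (hcl : a ∈ A ↔ a' ∈ A) {x : C} :
    ((clonePhi a a' hne x : C) ∈ A) ↔ x ∈ A := by
  by_cases h : x = a
  · subst h; rw [clonePhi_a]; exact hcl.symm
  · rw [clonePhi_ne h]

lemma cloneExt_coe {s : {c : C // c ≠ a} → {c : C // c ≠ a} → Prop}
    (x y : {c : C // c ≠ a}) : cloneExt a a' hne s (x : C) (y : C) ↔ s x y := by
  unfold cloneExt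
  rw [clonePhi_coe, clonePhi_coe]
  simp [x.2]

lemma isAxis_restrict {r : C → C → Prop} (h : IsAxis r) :
    IsAxis (fun x y : {c : C // c ≠ a} => r x y) := by
  obtain ⟨htot, htr, hirr⟩ := h
  refine ⟨fun x y => ?_, fun x y z hxy hyz => htr _ _ _ hxy hyz, fun x => hirr x⟩
  rcases htot x y with h | h | h
  · exact Or.inl (Subtype.ext h)
  · exact Or.inr (Or.inl h)
  · exact Or.inr (Or.inr h)

lemma isAxis_cloneExt {s : {c : C // c ≠ a} → {c : C // c ≠ a} → Prop}
    (h : IsAxis s) : IsAxis (cloneExt a a' hne s) := by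
  obtain ⟨htot, htr, hirr⟩ := h
  refine ⟨?_, ?_, ?_⟩
  · intro x y
    rcases htot (clonePhi a a' hne x) (clonePhi a a' hne y) with h | h | h
    · -- equal images: either x = y or they are a and a'
      by_cases hx : x = a
      · by_cases hy : y = a
        · exact Or.inl (hx.trans hy.symm)
        · subst hx
          rw [clonePhi_a, clonePhi_ne hy] at h
          have : y = a' := by
            have := congrArg Subtype.val h; simpa using this.symm
          exact Or.inr (Or.inl (Or.inr ⟨rfl, this⟩))
      · by_cases hy : y = a
        · subst hy
          rw [clonePhi_a, clonePhi_ne hx] at h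
          have : x = a' := by
            have := congrArg Subtype.val h; simpa using this
          exact Or.inr (Or.inr (Or.inr ⟨rfl, this⟩))
        · rw [clonePhi_ne hx, clonePhi_ne hy] at h
          exact Or.inl (congrArg Subtype.val h)
    · exact Or.inr (Or.inl (Or.inl h))
    · exact Or.inr (Or.inr (Or.inl h))
  · rintro x y z (hxy | ⟨hx, hy⟩) (hyz | ⟨hy', hz⟩)
    · exact Or.inl (htr _ _ _ hxy hyz)
    · subst hy' hz
      rw [clonePhi_a] at hxy
      exact Or.inl (by rw [clonePhi_ne hne]; exact hxy)
    · subst hx hy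
      rw [clonePhi_ne hne] at hyz
      exact Or.inl (by rw [clonePhi_a]; exact hyz)
    · exact absurd (hy.symm.trans hy') hne
  · rintro x (h | ⟨h1, h2⟩)
    · exact hirr _ h
    · exact hne (h2.symm.trans h1)

lemma isInterval_restrict {r : C → C → Prop} {A : Set C} (h : IsInterval r A) :
    IsInterval (fun x y : {c : C // c ≠ a} => r x y)
      {c : {c : C // c ≠ a} | (c : C) ∈ A} := by
  intro x hx y hy c hxc hcy
  exact h _ hx _ hy _ hxc hcy

lemma isInterval_cloneExt {s : {c : C // c ≠ a} → {c : C // c ≠ a} → Prop}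
    {A : Set C} (hcl : a ∈ A ↔ a' ∈ A) :
    IsInterval (cloneExt a a' hne s) A ↔
      IsInterval s {c : {c : C // c ≠ a} | (c : C) ∈ A} := by
  constructor
  · intro h x hx y hy c hxc hcy
    exact h _ hx _ hy _ ((cloneExt_coe x c).2 hxc) ((cloneExt_coe c y).2 hcy)
  · intro h x hx y hy c hxc hcy
    have hx' : (clonePhi a a' hne x : C) ∈ A := (clonePhi_mem hcl).2 hx
    have hy' : (clonePhi a a' hne y : C) ∈ A := (clonePhi_mem hcl).2 hy
    have hc' : (clonePhi a a' hne c : C) ∈ A := by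
      rcases hxc with hxc | ⟨hxa, hca⟩
      · rcases hcy with hcy | ⟨hca, hya⟩
        · exact h _ hx' _ hy' _ hxc hcy
        · subst hca hya
          rw [clonePhi_a]
          exact hy
      · subst hca hxa
        rw [clonePhi_ne hne]
        exact hcl.1 hx
    exact (clonePhi_mem hcl).1 hc'

lemma costVD_restrict_le {r : C → C → Prop} (A : Set C) :
    costVD (fun x y : {c : C // c ≠ a} => r x y) {c : {c : C // c ≠ a} | (c : C) ∈ A}
      ≤ costVD r A := by
  unfold costVD
  by_cases h : IsInterval r A
  · rw [if_pos h, if_pos (isInterval_restrict h)]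
  · rw [if_neg h]
    split_ifs <;> simp

lemma costVD_cloneExt {s : {c : C // c ≠ a} → {c : C // c ≠ a} → Prop}
    {A : Set C} (hcl : a ∈ A ↔ a' ∈ A) :
    costVD (cloneExt a a' hne s) A = costVD s {c : {c : C // c ≠ a} | (c : C) ∈ A} := by
  unfold costVD
  rw [if_congr (isInterval_cloneExt hcl) rfl rfl]

end CloneAux

theorem vd_resistance_to_cloning [Fintype C] (a a' : C) (hne : a' ≠ a)
    (P : Multiset (Set C)) (hP : ∀ B ∈ P, B.Nonempty)
    (hcl : ∀ A ∈ P, a ∈ A ↔ a' ∈ A) :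
    (∀ r : C → C → Prop, OptimalAxis costVD P r →
      OptimalAxis costVD (P.map (fun A => ({c : {c : C // c ≠ a} | (c : C) ∈ A} : Set {c : C // c ≠ a})))
        (fun x y : {c : C // c ≠ a} => r x y)) ∧
    (∀ s : {c : C // c ≠ a} → {c : C // c ≠ a} → Prop,
      OptimalAxis costVD (P.map (fun A => ({c : {c : C // c ≠ a} | (c : C) ∈ A} : Set {c : C // c ≠ a}))) s →
      ∃ r : C → C → Prop, OptimalAxis costVD P r ∧
        ∀ x y : {c : C // c ≠ a}, r x y ↔ s x y) := by
  set Q : Multiset (Set {c : C // c ≠ a}) :=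
    P.map (fun A => ({c : {c : C // c ≠ a} | (c : C) ∈ A} : Set {c : C // c ≠ a})) with hQ
  have hrest : ∀ r : C → C → Prop,
      profileCost costVD Q (fun x y : {c : C // c ≠ a} => r x y) ≤ profileCost costVD P r := by
    intro r
    unfold profileCost
    rw [hQ, Multiset.map_map]
    exact Multiset.sum_map_le_sum_map _ _ (fun A _ => costVD_restrict_le (r := r) A)
  have hext : ∀ s : {c : C // c ≠ a} → {c : C // c ≠ a} → Prop,
      profileCost costVD P (cloneExt a a' hne s) = profileCost costVD Q s := by
    intro s
    unfold profileCost
    rw [hQ, Multiset.map_map]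
    exact congrArg Multiset.sum (Multiset.map_congr rfl (fun A hA => costVD_cloneExt (hcl A hA)))
  constructor
  · intro r hr
    refine ⟨isAxis_restrict hr.1, ?_⟩
    intro s' hs'
    calc profileCost costVD Q (fun x y : {c : C // c ≠ a} => r x y)
        ≤ profileCost costVD P r := hrest r
      _ ≤ profileCost costVD P (cloneExt a a' hne s') := hr.2 _ (isAxis_cloneExt hs')
      _ = profileCost costVD Q s' := hext s'
  · intro s hs
    refine ⟨cloneExt a a' hne s, ⟨isAxis_cloneExt hs.1, ?_⟩,
      fun x y => cloneExt_coe x y⟩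
    intro r' hr'
    calc profileCost costVD P (cloneExt a a' hne s)
        = profileCost costVD Q s := hext s
      _ ≤ profileCost costVD Q (fun x y : {c : C // c ≠ a} => r' x y) :=
          hs.2 _ (isAxis_restrict hr')
      _ ≤ profileCost costVD P r' := hrest r'
end

section
/- No axis rule satisfies both heredity and consistency with linearity. -/
open scoped Classical

variable {C : Type*}

theorem no_heredity_and_linearity_consistency :
    ¬ ∃ f : ∀ (D : Type) [Fintype D], Multiset (Set D) → Set (D → D → Prop),
      -- f is an axis rule: nonempty output, outputs are axes, closed under reversal
      (∀ (D : Type) [Fintype D] (P : Multiset (Set D)),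
        (f D P).Nonempty ∧ (∀ r ∈ f D P, IsAxis r) ∧
        (∀ r ∈ f D P, (fun x y => r y x) ∈ f D P)) ∧
      -- consistency with linearity
      (∀ (D : Type) [Fintype D] (P : Multiset (Set D)),
        (∃ r : D → D → Prop, IsAxis r ∧ ∀ A ∈ P, IsInterval r A) →
        f D P = {r : D → D → Prop | IsAxis r ∧ ∀ A ∈ P, IsInterval r A}) ∧
      -- heredity
      (∀ (D : Type) [Fintype D] (P : Multiset (Set D)) (D' : Set D) [Fintype ↥D']
        (r : D → D → Prop), r ∈ f D P →
        (fun x y : ↥D' => r x y) ∈ f ↥D' (P.map (fun A => Subtype.val ⁻¹' A))) := by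
  rintro ⟨f, hax, hlin, hher⟩
  classical
  set P : Multiset (Set (Fin 4)) := {{0,1}, {0,2}, {0,3}} with hPdef
  obtain ⟨hne, haxes, hrev⟩ := hax (Fin 4) P
  obtain ⟨r0, hr0⟩ := hne
  obtain ⟨tri, htrans, hirr⟩ := haxes r0 hr0
  -- find two candidates on the same side of 0
  have side : ∀ i : Fin 4, i ≠ 0 → r0 0 i ∨ r0 i 0 := by
    intro i hi
    rcases tri 0 i with h | h | h
    · exact absurd h.symm hi
    · exact Or.inl h
    · exact Or.inr h
  have pick : ∀ i j : Fin 4, i ≠ 0 → j ≠ 0 → i ≠ j →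
      ((r0 0 i ∧ r0 0 j) ∨ (r0 i 0 ∧ r0 j 0)) →
      ∃ x y : Fin 4, x ≠ 0 ∧ y ≠ 0 ∧ x ≠ y ∧
        ((r0 0 x ∧ r0 0 y ∧ r0 x y) ∨ (r0 x 0 ∧ r0 y 0 ∧ r0 y x)) := by
    intro i j hi hj hij h
    rcases tri i j with he | hij' | hji'
    · exact absurd he hij
    · rcases h with ⟨h1, h2⟩ | ⟨h1, h2⟩
      · exact ⟨i, j, hi, hj, hij, Or.inl ⟨h1, h2, hij'⟩⟩
      · exact ⟨j, i, hj, hi, hij.symm, Or.inr ⟨h2, h1, hij'⟩⟩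
    · rcases h with ⟨h1, h2⟩ | ⟨h1, h2⟩
      · exact ⟨j, i, hj, hi, hij.symm, Or.inl ⟨h2, h1, hji'⟩⟩
      · exact ⟨i, j, hi, hj, hij, Or.inr ⟨h1, h2, hji'⟩⟩
  have key : ∃ x y : Fin 4, x ≠ 0 ∧ y ≠ 0 ∧ x ≠ y ∧
      ((r0 0 x ∧ r0 0 y ∧ r0 x y) ∨ (r0 x 0 ∧ r0 y 0 ∧ r0 y x)) := by
    have h1 := side 1 (by decide)
    have h2 := side 2 (by decide)
    have h3 := side 3 (by decide)
    rcases h1 with h1 | h1 <;> rcases h2 with h2 | h2 <;> rcases h3 with h3 | h3 <;>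
      first
        | exact pick 1 2 (by decide) (by decide) (by decide) (Or.inl ⟨h1, h2⟩)
        | exact pick 1 2 (by decide) (by decide) (by decide) (Or.inr ⟨h1, h2⟩)
        | exact pick 1 3 (by decide) (by decide) (by decide) (Or.inl ⟨h1, h3⟩)
        | exact pick 1 3 (by decide) (by decide) (by decide) (Or.inr ⟨h1, h3⟩)
        | exact pick 2 3 (by decide) (by decide) (by decide) (Or.inl ⟨h2, h3⟩)
        | exact pick 2 3 (by decide) (by decide) (by decide) (Or.inr ⟨h2, h3⟩)
  obtain ⟨x, y, hx0, hy0, hxy, hcase⟩ := key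
  obtain ⟨r, hrmem, hr0x, hr0y, hrxy⟩ :
      ∃ r : Fin 4 → Fin 4 → Prop, r ∈ f (Fin 4) P ∧ r 0 x ∧ r 0 y ∧ r x y := by
    rcases hcase with ⟨a, b, c⟩ | ⟨a, b, c⟩
    · exact ⟨r0, hr0, a, b, c⟩
    · exact ⟨fun u v => r0 v u, hrev r0 hr0, a, b, c⟩
  set D' : Set (Fin 4) := {0, x, y} with hD'
  have hmem := hher (Fin 4) P D' r hrmem
  -- ranks on D'
  set rk : ↥D' → ℕ := fun p => if p.1 = x then 0 else if p.1 = 0 then 1 else 2 with hrkdef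
  have hvals : ∀ p : ↥D', p.1 = 0 ∨ p.1 = x ∨ p.1 = y := by
    rintro ⟨p, hp⟩
    simpa [hD', Set.mem_insert_iff, Set.mem_singleton_iff] using hp
  have rk0 : ∀ p : ↥D', p.1 = 0 → rk p = 1 := by
    intro p hp; simp [hrkdef, hp, Ne.symm hx0]
  have rkx : ∀ p : ↥D', p.1 = x → rk p = 0 := by
    intro p hp; simp [hrkdef, hp]
  have rky : ∀ p : ↥D', p.1 = y → rk p = 2 := by
    intro p hp; simp [hrkdef, hp, Ne.symm hxy, hy0]
  have hv : ∀ p : ↥D', (rk p = 1 ∧ p.1 = 0) ∨ (rk p = 0 ∧ p.1 = x) ∨ (rk p = 2 ∧ p.1 = y) := by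
    intro p
    rcases hvals p with hp | hp | hp
    · exact Or.inl ⟨rk0 p hp, hp⟩
    · exact Or.inr (Or.inl ⟨rkx p hp, hp⟩)
    · exact Or.inr (Or.inr ⟨rky p hp, hp⟩)
  have hrk_inj : ∀ p q : ↥D', rk p = rk q → p = q := by
    intro p q h
    apply Subtype.ext
    rcases hv p with ⟨e, hp⟩ | ⟨e, hp⟩ | ⟨e, hp⟩ <;>
      rcases hv q with ⟨e', hq⟩ | ⟨e', hq⟩ | ⟨e', hq⟩ <;>
      rw [e, e'] at h <;> rw [hp, hq] <;>
      first | rfl | exact absurd h (by decide)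
  have hrk_le : ∀ p : ↥D', rk p ≤ 2 := by
    intro p; rcases hv p with ⟨e, _⟩ | ⟨e, _⟩ | ⟨e, _⟩ <;> omega
  have hrk1 : ∀ p : ↥D', rk p = 1 → p.1 = 0 := by
    intro p h
    rcases hv p with ⟨e, hp⟩ | ⟨e, hp⟩ | ⟨e, hp⟩ <;> first | exact hp | omega
  have hsax : IsAxis (fun p q : ↥D' => rk p < rk q) := by
    refine ⟨?_, ?_, ?_⟩
    · intro p q
      rcases lt_trichotomy (rk p) (rk q) with h | h | h
      · exact Or.inr (Or.inl h)
      · exact Or.inl (hrk_inj p q h)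
      · exact Or.inr (Or.inr h)
    · intro p q z h1 h2; exact h1.trans h2
    · intro p; exact lt_irrefl _
  have h0P : ∀ B ∈ P, (0 : Fin 4) ∈ B := by
    intro B hB
    simp only [hPdef, Multiset.insert_eq_cons, Multiset.mem_cons, Multiset.mem_singleton] at hB
    rcases hB with rfl | rfl | rfl <;> simp
  have hint : ∀ A ∈ P.map (fun A => (Subtype.val ⁻¹' A : Set ↥D')),
      IsInterval (fun p q : ↥D' => rk p < rk q) A := by
    intro A hA
    obtain ⟨B, hB, rfl⟩ := Multiset.mem_map.mp hA
    intro a _ b hb c hac hcb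
    have hac' : rk a < rk c := hac
    have hcb' : rk c < rk b := hcb
    have hb2 := hrk_le b
    have h1 : rk c = 1 := by omega
    have hc0 := hrk1 c h1
    show c ∈ Subtype.val ⁻¹' B
    simp only [Set.mem_preimage]
    rw [hc0]
    exact h0P B hB
  have hflin := hlin ↥D' (P.map (fun A => (Subtype.val ⁻¹' A : Set ↥D')))
    ⟨fun p q : ↥D' => rk p < rk q, hsax, hint⟩
  rw [hflin] at hmem
  obtain ⟨-, hintr⟩ := hmem
  -- the ballot {0, y}
  have hyP : ({0, y} : Set (Fin 4)) ∈ P := by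
    have h4 := y.isLt
    have hvne : y.val ≠ 0 := fun h => hy0 (Fin.ext h)
    have hy3 : y.val = 1 ∨ y.val = 2 ∨ y.val = 3 := by omega
    rcases hy3 with h | h | h
    · have : y = 1 := Fin.ext (by simpa using h)
      rw [this]; simp [hPdef]
    · have : y = 2 := Fin.ext (by simpa using h)
      rw [this]; simp [hPdef]
    · have : y = 3 := Fin.ext (by simpa using h)
      rw [this]; simp [hPdef]
  have hAin : (Subtype.val ⁻¹' ({0, y} : Set (Fin 4)) : Set ↥D') ∈
      P.map (fun A => (Subtype.val ⁻¹' A : Set ↥D')) :=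
    Multiset.mem_map_of_mem _ hyP
  have hIA := hintr _ hAin
  have h0D : (0 : Fin 4) ∈ D' := by simp [hD']
  have hxD : x ∈ D' := by simp [hD']
  have hyD : y ∈ D' := by simp [hD']
  have h0A : (⟨0, h0D⟩ : ↥D') ∈ (Subtype.val ⁻¹' ({0, y} : Set (Fin 4)) : Set ↥D') := by simp
  have hyA : (⟨y, hyD⟩ : ↥D') ∈ (Subtype.val ⁻¹' ({0, y} : Set (Fin 4)) : Set ↥D') := by simp
  have hxA := hIA _ h0A _ hyA ⟨x, hxD⟩ hr0x hrxy
  simp only [Set.mem_preimage, Set.mem_insert_iff, Set.mem_singleton_iff] at hxA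
  rcases hxA with h | h
  · exact hx0 h
  · exact hxy h
end

section
/- The Ballot Completion rule satisfies partition consistency: if the co-approval partition of profile P is C₁,…,C_k, then ◁ ∈ BC(P) if and only if each C_j is an interval of ◁ and the restriction of ◁ to C_j is BC-optimal for the restriction of P to C_j. -/
open scoped Classical

variable {C : Type*}

/-- The co-approval equivalence class of candidate `x` in profile `P`. -/
def coApprovalClass (P : Multiset (Set C)) (x : C) : Set C :=
  {y : C | Relation.EqvGen (fun u v => ∃ A ∈ P, u ∈ A ∧ v ∈ A) x y}

/-!
Every ballot lies inside a single co-approval class, so the BC cost of an axis on which every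
class is an interval splits as the sum, over the classes, of the costs of the restricted axes on
the restricted profiles. If some class is not an interval, moving the classes apart into
consecutive blocks (keeping the order inside each block) removes every outsider from the gaps of
each ballot and adds no new gaps, so it strictly lowers the cost of a ballot that straddled an
outsider; hence every class is an interval of an optimal axis. Conversely, replacing the order
inside one interval class by another axis of that class changes only the cost of the ballots in
that class.
-/

open Function

section Axis

variable {r : C → C → Prop}

theorem IsAxis.asymm (h : IsAxis r) {a b : C} (hab : r a b) : ¬ r b a :=
  fun hba => h.2.2 a (h.2.1 a b a hab hba)

theorem isAxis_of_injective {α : Type*} [LinearOrder α] {f : C → α} (hf : Injective f) :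
    IsAxis (fun u v => f u < f v) := by
  refine ⟨fun x y => ?_, fun _ _ _ => lt_trans, fun x => lt_irrefl (f x)⟩
  rcases lt_trichotomy (f x) (f y) with hxy | hxy | hxy
  · exact Or.inr (Or.inl hxy)
  · exact Or.inl (hf hxy)
  · exact Or.inr (Or.inr hxy)

theorem IsAxis.restrict (h : IsAxis r) (S : Set C) : IsAxis (fun u v : S => r u v) :=
  ⟨fun x y => (h.1 x y).imp_left Subtype.ext, fun x y z => h.2.1 x y z, fun x => h.2.2 x⟩

noncomputable def rank (r : C → C → Prop) (x : C) : ℕ :=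
  {y | r y x}.ncard

variable [Finite C]

theorem IsAxis.rank_lt_rank (h : IsAxis r) {x y : C} (hxy : r x y) : rank r x < rank r y :=
  Set.ncard_lt_ncard ⟨fun z hz => h.2.1 z x y hz hxy, fun hsub => h.2.2 x (hsub hxy)⟩

theorem IsAxis.rank_lt_rank_iff (h : IsAxis r) {x y : C} : rank r x < rank r y ↔ r x y := by
  refine ⟨fun hlt => ?_, h.rank_lt_rank⟩
  rcases h.1 x y with rfl | hxy | hyx
  · exact absurd hlt (lt_irrefl _)
  · exact hxy
  · exact absurd (h.rank_lt_rank hyx) hlt.asymm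

theorem IsAxis.rank_injective (h : IsAxis r) : Injective (rank r) := by
  intro x y hxy
  rcases h.1 x y with hxy' | hr | hr
  · exact hxy'
  · exact absurd hxy (h.rank_lt_rank hr).ne
  · exact absurd hxy (h.rank_lt_rank hr).ne'

end Axis

section Gaps

variable {r : C → C → Prop} {S A : Set C}

def gapSet (r : C → C → Prop) (A : Set C) : Set C :=
  {b | b ∉ A ∧ ∃ a ∈ A, ∃ c ∈ A, r a b ∧ r b c}

theorem costBC_eq_ncard_gapSet : costBC r A = (gapSet r A).ncard := rfl

theorem costBC_empty (r : C → C → Prop) : costBC r ∅ = 0 := by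
  simp [costBC]

theorem gapSet_subset_of_isInterval (hS : IsInterval r S) (hAS : A ⊆ S) : gapSet r A ⊆ S := by
  rintro b ⟨-, a, ha, c, hc, hab, hbc⟩
  exact hS a (hAS ha) c (hAS hc) b hab hbc

theorem costBC_restrict (hAS : A ⊆ S) :
    costBC (fun u v : S => r u v) (Subtype.val ⁻¹' A) = (gapSet r A ∩ S).ncard := by
  have hgap : gapSet (fun u v : S => r u v) (Subtype.val ⁻¹' A) = Subtype.val ⁻¹' gapSet r A := by
    ext b
    constructor
    · rintro ⟨hb, a, ha, c, hc, habc⟩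
      exact ⟨hb, a, ha, c, hc, habc⟩
    · rintro ⟨hb, a, ha, c, hc, habc⟩
      exact ⟨hb, ⟨a, hAS ha⟩, ha, ⟨c, hAS hc⟩, hc, habc⟩
  rw [costBC_eq_ncard_gapSet, hgap, ← Set.ncard_image_of_injective _ Subtype.val_injective,
    Set.image_preimage_eq_inter_range, Subtype.range_coe]

theorem costBC_restrict_le [Finite C] (hAS : A ⊆ S) :
    costBC (fun u v : S => r u v) (Subtype.val ⁻¹' A) ≤ costBC r A :=
  costBC_restrict hAS ▸ Set.ncard_le_ncard Set.inter_subset_left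

theorem costBC_restrict_of_isInterval (hS : IsInterval r S) (hAS : A ⊆ S) :
    costBC (fun u v : S => r u v) (Subtype.val ⁻¹' A) = costBC r A := by
  rw [costBC_restrict hAS, Set.inter_eq_left.2 (gapSet_subset_of_isInterval hS hAS),
    costBC_eq_ncard_gapSet]

end Gaps

section Profile

variable {r : C → C → Prop} {S : Set C}

theorem profileCost_add (cost : (C → C → Prop) → Set C → ℕ) (P Q : Multiset (Set C)) :
    profileCost cost (P + Q) r = profileCost cost P r + profileCost cost Q r := by
  simp [profileCost]

theorem Multiset.sum_map_filter_eq_sum_map_ite {α M : Type*} [AddCommMonoid M] (m : Multiset α)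
    (p : α → Prop) [DecidablePred p] (f : α → M) :
    ((m.filter p).map f).sum = (m.map fun a => if p a then f a else 0).sum := by
  induction m using Multiset.induction_on with
  | empty => simp
  | cons a m ih => by_cases hp : p a <;> simp [hp, ih]

noncomputable def restrictProfile (P : Multiset (Set C)) (S : Set C) : Multiset (Set S) :=
  (P.filter (· ⊆ S)).map (Subtype.val ⁻¹' ·)

theorem profileCost_restrictProfile_of_isInterval (P : Multiset (Set C)) (hS : IsInterval r S) :
    profileCost costBC (restrictProfile P S) (fun u v : S => r u v)
      = profileCost costBC (P.filter (· ⊆ S)) r := by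
  rw [profileCost, profileCost, restrictProfile, Multiset.map_map]
  exact congrArg Multiset.sum <| Multiset.map_congr rfl fun A hA =>
    costBC_restrict_of_isInterval hS (Multiset.mem_filter.1 hA).2

theorem profileCost_restrictProfile_le [Finite C] (P : Multiset (Set C)) :
    profileCost costBC (restrictProfile P S) (fun u v : S => r u v)
      ≤ profileCost costBC (P.filter (· ⊆ S)) r := by
  rw [profileCost, profileCost, restrictProfile, Multiset.map_map]
  exact Multiset.sum_map_le_sum_map _ _ fun A hA => costBC_restrict_le (Multiset.mem_filter.1 hA).2

end Profile

section CoApproval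

variable {P : Multiset (Set C)} {A : Set C} {a x y : C}

theorem mem_coApprovalClass_self (P : Multiset (Set C)) (x : C) : x ∈ coApprovalClass P x :=
  Relation.EqvGen.refl x

theorem coApprovalClass_eq_of_mem (h : y ∈ coApprovalClass P x) :
    coApprovalClass P y = coApprovalClass P x := by
  ext z
  exact ⟨Relation.EqvGen.trans _ _ _ h, Relation.EqvGen.trans _ _ _ (Relation.EqvGen.symm _ _ h)⟩

theorem subset_coApprovalClass (hA : A ∈ P) (ha : a ∈ A) : A ⊆ coApprovalClass P a :=
  fun _ hb => Relation.EqvGen.rel _ _ ⟨A, hA, ha, hb⟩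

theorem subset_coApprovalClass_of_mem (hA : A ∈ P) (ha : a ∈ A)
    (hax : a ∈ coApprovalClass P x) : A ⊆ coApprovalClass P x :=
  coApprovalClass_eq_of_mem hax ▸ subset_coApprovalClass hA ha

theorem disjoint_coApprovalClass_of_not_subset (hA : A ∈ P) (hAx : ¬ A ⊆ coApprovalClass P x) :
    Disjoint A (coApprovalClass P x) :=
  Set.disjoint_left.2 fun _ ha hax => hAx (subset_coApprovalClass_of_mem hA ha hax)

theorem IsAxis.isInterval_coApprovalClass {r : C → C → Prop} (h : IsAxis r)
    (hgap : ∀ A ∈ P, A ⊆ coApprovalClass P x → gapSet r A ⊆ coApprovalClass P x) :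
    IsInterval r (coApprovalClass P x) := by
  set S := coApprovalClass P x
  intro u hu v hv w huw hwv
  by_contra hw
  -- Co-approval never separates the members of `S` lying left of `w` from those lying right of it.
  have hside : ∀ y z, (∃ A ∈ P, y ∈ A ∧ z ∈ A) → (y ∈ S ∧ r y w ↔ z ∈ S ∧ r z w) := by
    rintro y z ⟨A, hA, hy, hz⟩
    by_cases hAS : A ⊆ S
    · have hwA : w ∉ A := fun hwA => hw (hAS hwA)
      have hyz : ¬ (r y w ∧ r w z) := fun h' => hw (hgap A hA hAS ⟨hwA, y, hy, z, hz, h'⟩)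
      have hzy : ¬ (r z w ∧ r w y) := fun h' => hw (hgap A hA hAS ⟨hwA, z, hz, y, hy, h'⟩)
      have hy' := h.1 y w
      have hz' := h.1 z w
      have : y ≠ w := fun h' => hwA (h' ▸ hy)
      have : z ≠ w := fun h' => hwA (h' ▸ hz)
      simp only [hAS hy, hAS hz, true_and]
      tauto
    · have hyS : y ∉ S := fun hyS => hAS (subset_coApprovalClass_of_mem hA hy hyS)
      have hzS : z ∉ S := fun hzS => hAS (subset_coApprovalClass_of_mem hA hz hzS)
      simp [hyS, hzS]
  have hequiv : Equivalence fun y z => (y ∈ S ∧ r y w ↔ z ∈ S ∧ r z w) :=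
    ⟨fun _ => Iff.rfl, Iff.symm, Iff.trans⟩
  have huv : Relation.EqvGen _ u v := Relation.EqvGen.trans _ _ _ (Relation.EqvGen.symm _ _ hu) hv
  have hvw := ((hequiv.eqvGen_iff.1 (Relation.EqvGen.mono hside _ _ huv)).1 ⟨hu, huw⟩).2
  exact h.asymm hvw hwv

theorem profileCost_eq_sum_coApprovalClass [Fintype C] (P : Multiset (Set C))
    (r : C → C → Prop) :
    profileCost costBC P r = ∑ S ∈ Finset.univ.image (coApprovalClass P),
      profileCost costBC (P.filter (· ⊆ S)) r := by
  have hsplit : ∀ A ∈ P, costBC r A = ∑ S ∈ Finset.univ.image (coApprovalClass P),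
      if A ⊆ S then costBC r A else 0 := by
    intro A hA
    rcases A.eq_empty_or_nonempty with rfl | ⟨a, ha⟩
    · simp [costBC_empty]
    rw [Finset.sum_eq_single_of_mem _ (Finset.mem_image_of_mem _ (Finset.mem_univ a)),
      if_pos (subset_coApprovalClass hA ha)]
    rintro _ hS hne
    obtain ⟨y, -, rfl⟩ := Finset.mem_image.1 hS
    exact if_neg fun hAy => hne (coApprovalClass_eq_of_mem (hAy ha)).symm
  simp only [profileCost, Multiset.sum_map_filter_eq_sum_map_ite]
  rw [Multiset.map_congr rfl hsplit, Multiset.sum_map_sum]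

end CoApproval

section BlockAxis

variable [Finite C] {P : Multiset (Set C)} {r : C → C → Prop} {A : Set C} {u v x : C}

noncomputable def blockKey (P : Multiset (Set C)) (r : C → C → Prop) (x : C) : ℕ :=
  sInf (rank r '' coApprovalClass P x)

/-- Lay the co-approval classes out as consecutive blocks, ordered by their leftmost members,
keeping the order of `r` inside each block. -/
noncomputable def blockAxis (P : Multiset (Set C)) (r : C → C → Prop) (u v : C) : Prop :=
  toLex (blockKey P r u, rank r u) < toLex (blockKey P r v, rank r v)

theorem blockKey_eq_iff (h : IsAxis r) :
    blockKey P r u = blockKey P r v ↔ coApprovalClass P u = coApprovalClass P v := by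
  refine ⟨fun huv => ?_, fun huv => by rw [blockKey, blockKey, huv]⟩
  obtain ⟨a, ha, hau⟩ := Nat.sInf_mem (Set.image_nonempty.2 ⟨u, mem_coApprovalClass_self P u⟩)
  obtain ⟨b, hb, hbv⟩ := Nat.sInf_mem (Set.image_nonempty.2 ⟨v, mem_coApprovalClass_self P v⟩)
  have hab : a = b := h.rank_injective (hau.trans (huv.trans hbv.symm))
  rw [← coApprovalClass_eq_of_mem ha, ← coApprovalClass_eq_of_mem hb, hab]

theorem isAxis_blockAxis (h : IsAxis r) : IsAxis (blockAxis P r) :=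
  isAxis_of_injective fun _ _ huv => h.rank_injective (Prod.ext_iff.1 (toLex.injective huv)).2

theorem blockAxis_iff (h : IsAxis r) (huv : coApprovalClass P u = coApprovalClass P v) :
    blockAxis P r u v ↔ r u v := by
  rw [blockAxis, Prod.Lex.toLex_lt_toLex, (blockKey_eq_iff h).2 huv, h.rank_lt_rank_iff]
  simp

theorem restrict_blockAxis (h : IsAxis r) (x : C) :
    (fun u v : coApprovalClass P x => blockAxis P r u v)
      = fun u v : coApprovalClass P x => r u v := by
  funext u v
  exact propext (blockAxis_iff h ((coApprovalClass_eq_of_mem u.2).trans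
    (coApprovalClass_eq_of_mem v.2).symm))

theorem isInterval_blockAxis (h : IsAxis r) (x : C) :
    IsInterval (blockAxis P r) (coApprovalClass P x) := by
  intro u hu v hv w huw hwv
  have huv : blockKey P r u = blockKey P r v :=
    (blockKey_eq_iff h).2 ((coApprovalClass_eq_of_mem hu).trans (coApprovalClass_eq_of_mem hv).symm)
  rw [blockAxis, Prod.Lex.toLex_lt_toLex] at huw hwv
  have hwu : blockKey P r w = blockKey P r u := by omega
  exact coApprovalClass_eq_of_mem hu ▸ (blockKey_eq_iff h).1 hwu ▸ mem_coApprovalClass_self P w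

theorem costBC_blockAxis_of_subset (h : IsAxis r) (hAx : A ⊆ coApprovalClass P x) :
    costBC (blockAxis P r) A = (gapSet r A ∩ coApprovalClass P x).ncard := by
  rw [← costBC_restrict_of_isInterval (isInterval_blockAxis h x) hAx, restrict_blockAxis h x,
    costBC_restrict hAx]

theorem costBC_blockAxis_le (h : IsAxis r) (hA : A ∈ P) :
    costBC (blockAxis P r) A ≤ costBC r A := by
  rcases A.eq_empty_or_nonempty with rfl | ⟨a, ha⟩
  · simp [costBC_empty]
  rw [costBC_blockAxis_of_subset h (subset_coApprovalClass hA ha)]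
  exact Set.ncard_le_ncard Set.inter_subset_left

theorem OptimalAxis.isInterval_coApprovalClass (hr : OptimalAxis costBC P r) (x : C) :
    IsInterval r (coApprovalClass P x) := by
  refine hr.1.isInterval_coApprovalClass fun A hA hAx => ?_
  by_contra hgap
  obtain ⟨w, hwA, hw⟩ := Set.not_subset.1 hgap
  have hlt : costBC (blockAxis P r) A < costBC r A := by
    rw [costBC_blockAxis_of_subset hr.1 hAx]
    exact Set.ncard_lt_ncard ⟨Set.inter_subset_left, fun hsub => hw (hsub hwA).2⟩
  exact (hr.2 _ (isAxis_blockAxis hr.1)).not_gt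
    (Multiset.sum_lt_sum (fun B hB => costBC_blockAxis_le hr.1 hB) ⟨A, hA, hlt⟩)

end BlockAxis

section Splice

variable {S A : Set C} {r : C → C → Prop} {q : S → S → Prop} {u v : C}

noncomputable def splice (S : Set C) (r : C → C → Prop) (q : S → S → Prop) (u v : C) : Prop :=
  if h : u ∈ S ∧ v ∈ S then q ⟨u, h.1⟩ ⟨v, h.2⟩ else r u v

theorem splice_iff_of_mem (hu : u ∈ S) (hv : v ∈ S) : splice S r q u v ↔ q ⟨u, hu⟩ ⟨v, hv⟩ := by
  rw [splice, dif_pos ⟨hu, hv⟩]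

theorem splice_iff_of_notMem (h : u ∉ S ∨ v ∉ S) : splice S r q u v ↔ r u v := by
  rw [splice, dif_neg (by tauto)]

theorem restrict_splice : (fun u v : S => splice S r q u v) = q := by
  funext u v
  exact propext (splice_iff_of_mem u.2 v.2)

theorem IsInterval.splice (hS : IsInterval r S) : IsInterval (splice S r q) S := by
  intro a ha b hb w haw hwb
  by_contra hw
  exact hw (hS a ha b hb w ((splice_iff_of_notMem (Or.inr hw)).1 haw)
    ((splice_iff_of_notMem (Or.inl hw)).1 hwb))

theorem IsInterval.rel_iff_rel_of_notMem (hS : IsInterval r S) (h : IsAxis r) {w a b : C}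
    (hw : w ∉ S) (ha : a ∈ S) (hb : b ∈ S) : (r a w ↔ r b w) ∧ (r w a ↔ r w b) := by
  have hneq : ∀ c ∈ S, c ≠ w := fun c hc hcw => hw (hcw ▸ hc)
  have := h.1 a w
  have := h.1 b w
  have := hS a ha b hb w
  have := hS b hb a ha w
  have := h.asymm (a := a) (b := w)
  have := h.asymm (a := b) (b := w)
  have := hneq a ha
  have := hneq b hb
  tauto

theorem IsAxis.splice (h : IsAxis r) (hS : IsInterval r S) (hq : IsAxis q) :
    IsAxis (splice S r q) := by
  refine ⟨fun x y => ?_, fun x y z hxy hyz => ?_, fun x hx => ?_⟩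
  · by_cases hx : x ∈ S <;> by_cases hy : y ∈ S
    · rw [splice_iff_of_mem hx hy, splice_iff_of_mem hy hx]
      exact (hq.1 ⟨x, hx⟩ ⟨y, hy⟩).imp_left (congrArg Subtype.val)
    all_goals rw [splice_iff_of_notMem (by tauto), splice_iff_of_notMem (by tauto)]; exact h.1 x y
  · by_cases hx : x ∈ S <;> by_cases hy : y ∈ S <;> by_cases hz : z ∈ S
    · rw [splice_iff_of_mem hx hy] at hxy
      rw [splice_iff_of_mem hy hz] at hyz
      exact (splice_iff_of_mem hx hz).2 (hq.2.1 _ _ _ hxy hyz)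
    · rw [splice_iff_of_notMem (Or.inr hz)] at hyz ⊢
      exact (hS.rel_iff_rel_of_notMem h hz hy hx).1.1 hyz
    · rw [splice_iff_of_notMem (Or.inr hy)] at hxy
      rw [splice_iff_of_notMem (Or.inl hy)] at hyz
      exact absurd (hS x hx z hz y hxy hyz) hy
    · rw [splice_iff_of_notMem (Or.inr hy)] at hxy
      rw [splice_iff_of_notMem (Or.inl hy)] at hyz
      exact (splice_iff_of_notMem (Or.inr hz)).2 (h.2.1 x y z hxy hyz)
    · rw [splice_iff_of_notMem (Or.inl hx)] at hxy ⊢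
      exact (hS.rel_iff_rel_of_notMem h hx hy hz).2.1 hxy
    all_goals
      rw [splice_iff_of_notMem (by tauto)] at hxy hyz ⊢
      exact h.2.1 x y z hxy hyz
  · by_cases hxS : x ∈ S
    · exact hq.2.2 ⟨x, hxS⟩ ((splice_iff_of_mem hxS hxS).1 hx)
    · exact h.2.2 x ((splice_iff_of_notMem (Or.inl hxS)).1 hx)

theorem costBC_splice_of_disjoint (hAS : Disjoint A S) : costBC (splice S r q) A = costBC r A := by
  have hout : ∀ a ∈ A, a ∉ S := fun _ ha => Set.disjoint_left.1 hAS ha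
  have hgap : gapSet (splice S r q) A = gapSet r A := by
    ext b
    refine and_congr_right fun _ => exists_congr fun a => and_congr_right fun ha =>
      exists_congr fun c => and_congr_right fun hc => ?_
    rw [splice_iff_of_notMem (Or.inl (hout a ha)), splice_iff_of_notMem (Or.inr (hout c hc))]
  rw [costBC_eq_ncard_gapSet, costBC_eq_ncard_gapSet, hgap]

end Splice

section Optimal

variable {P : Multiset (Set C)} {S : Set C} {r : C → C → Prop}

theorem OptimalAxis.restrict (hr : OptimalAxis costBC P r) (hS : IsInterval r S)
    (hP : ∀ A ∈ P, ¬ A ⊆ S → Disjoint A S) :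
    OptimalAxis costBC (restrictProfile P S) (fun u v : S => r u v) := by
  refine ⟨hr.1.restrict S, fun q hq => ?_⟩
  have hout : profileCost costBC (P.filter (¬ · ⊆ S)) (splice S r q)
      = profileCost costBC (P.filter (¬ · ⊆ S)) r :=
    congrArg Multiset.sum <| Multiset.map_congr rfl fun A hA =>
      costBC_splice_of_disjoint (hP A (Multiset.mem_filter.1 hA).1 (Multiset.mem_filter.1 hA).2)
  have hle := hr.2 _ (hr.1.splice hS hq)
  rw [← Multiset.filter_add_not (· ⊆ S) P, profileCost_add, profileCost_add, hout] at hle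
  calc profileCost costBC (restrictProfile P S) (fun u v : S => r u v)
      = profileCost costBC (P.filter (· ⊆ S)) r := profileCost_restrictProfile_of_isInterval P hS
    _ ≤ profileCost costBC (P.filter (· ⊆ S)) (splice S r q) := by omega
    _ = profileCost costBC (restrictProfile P S) q := by
      rw [← profileCost_restrictProfile_of_isInterval P hS.splice, restrict_splice]

theorem optimalAxis_of_restrict_coApprovalClass [Fintype C] (hr : IsAxis r)
    (h : ∀ x, IsInterval r (coApprovalClass P x) ∧
      OptimalAxis costBC (restrictProfile P (coApprovalClass P x))
        (fun u v : coApprovalClass P x => r u v)) :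
    OptimalAxis costBC P r := by
  refine ⟨hr, fun r' hr' => ?_⟩
  rw [profileCost_eq_sum_coApprovalClass, profileCost_eq_sum_coApprovalClass]
  refine Finset.sum_le_sum fun S hS => ?_
  obtain ⟨x, -, rfl⟩ := Finset.mem_image.1 hS
  calc profileCost costBC (P.filter (· ⊆ coApprovalClass P x)) r
      = profileCost costBC (restrictProfile P (coApprovalClass P x))
          (fun u v : coApprovalClass P x => r u v) :=
        (profileCost_restrictProfile_of_isInterval P (h x).1).symm
    _ ≤ profileCost costBC (restrictProfile P (coApprovalClass P x))
          (fun u v : coApprovalClass P x => r' u v) := (h x).2.2 _ (hr'.restrict _)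
    _ ≤ profileCost costBC (P.filter (· ⊆ coApprovalClass P x)) r' :=
        profileCost_restrictProfile_le P

end Optimal

theorem bc_partition_consistency_general [Fintype C] (P : Multiset (Set C))
    (r : C → C → Prop) :
    OptimalAxis costBC P r ↔
      (IsAxis r ∧ ∀ x : C,
        (∀ u ∈ coApprovalClass P x, ∀ v ∈ coApprovalClass P x, ∀ w : C,
          r u w → r w v → w ∈ coApprovalClass P x) ∧
        OptimalAxis costBC
          ((P.filter (fun A => A ⊆ coApprovalClass P x)).map
            (fun A => (Subtype.val ⁻¹' A : Set ↥(coApprovalClass P x))))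
          (fun u v : ↥(coApprovalClass P x) => r u v)) := by
  refine ⟨fun hr => ⟨hr.1, fun x => ?_⟩,
    fun ⟨hr, h⟩ => optimalAxis_of_restrict_coApprovalClass hr h⟩
  have hS := hr.isInterval_coApprovalClass x
  exact ⟨hS, hr.restrict hS fun _ hA => disjoint_coApprovalClass_of_not_subset hA⟩

theorem bc_partition_consistency [Fintype C] (P : Multiset (Set C))
    (hP : ∀ B ∈ P, B.Nonempty) (r : C → C → Prop) :
    OptimalAxis costBC P r ↔
      (IsAxis r ∧ ∀ x : C,
        (∀ u ∈ coApprovalClass P x, ∀ v ∈ coApprovalClass P x, ∀ w : C,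
          r u w → r w v → w ∈ coApprovalClass P x) ∧
        OptimalAxis costBC
          ((P.filter (fun A => A ⊆ coApprovalClass P x)).map
            (fun A => (Subtype.val ⁻¹' A : Set ↥(coApprovalClass P x))))
          (fun u v : ↥(coApprovalClass P x) => r u v)) :=
  bc_partition_consistency_general P r
end

section
/- For every veto profile (every ballot has size m−1), every axis optimal for the Forbidden Triples rule has the property that its median candidate (at position (m+1)/2 for m odd) is a candidate with the highest approval score. -/
open scoped Classical

variable {C : Type*}

/-- Approval score of candidate `c`: number of ballots approving `c`. -/
noncomputable def approvalScore (P : Multiset (Set C)) (c : C) : ℕ :=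
  Multiset.countP (fun A => c ∈ A) P

lemma ncard_sprod {α β : Type*} (A : Set α) (B : Set β) :
    (A ×ˢ B).ncard = A.ncard * B.ncard := by
  rw [← Nat.card_coe_set_eq, ← Nat.card_coe_set_eq, ← Nat.card_coe_set_eq,
    Nat.card_congr (Equiv.Set.prod A B), Nat.card_prod]

lemma costFT_veto {r : C → C → Prop} (hr : IsAxis r) (c : C) :
    costFT r ({c}ᶜ) = {a | r a c}.ncard * {d | r c d}.ncard := by
  obtain ⟨htri, htrans, hirr⟩ := hr
  have hset : {t : C × C × C | t.1 ∈ ({c}ᶜ : Set C) ∧ t.2.2 ∈ ({c}ᶜ : Set C) ∧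
      t.2.1 ∉ ({c}ᶜ : Set C) ∧ r t.1 t.2.1 ∧ r t.2.1 t.2.2} =
      (fun p : C × C => (p.1, c, p.2)) '' ({a | r a c} ×ˢ {d | r c d}) := by
    ext ⟨a, b, d⟩
    simp only [Set.mem_setOf_eq, Set.mem_compl_iff, Set.mem_singleton_iff, not_not,
      Set.mem_image, Set.mem_prod, Prod.mk.injEq]
    constructor
    · rintro ⟨h1, h2, rfl, h4, h5⟩
      exact ⟨(a, d), ⟨h4, h5⟩, rfl, rfl, rfl⟩
    · rintro ⟨⟨a', d'⟩, ⟨h4, h5⟩, rfl, rfl, rfl⟩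
      refine ⟨fun h => hirr c (h ▸ h4), fun h => hirr c (h ▸ h5), rfl, h4, h5⟩
  have hinj : Function.Injective (fun p : C × C => (p.1, c, p.2)) := by
    rintro ⟨a, b⟩ ⟨a', b'⟩ h
    simpa [Prod.ext_iff] using h
  rw [costFT, hset, Set.ncard_image_of_injective _ hinj, ncard_sprod]

lemma rank_sum [Fintype C] {r : C → C → Prop} (hr : IsAxis r) (c : C) :
    {a | r a c}.ncard + {d | r c d}.ncard = Fintype.card C - 1 := by
  obtain ⟨htri, htrans, hirr⟩ := hr
  have hdisj : Disjoint {a | r a c} {d | r c d} := by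
    rw [Set.disjoint_left]
    intro a ha hb
    exact hirr a (htrans a c a ha hb)
  have hunion : {a | r a c} ∪ {d | r c d} = ({c}ᶜ : Set C) := by
    ext a
    simp only [Set.mem_union, Set.mem_setOf_eq, Set.mem_compl_iff, Set.mem_singleton_iff]
    constructor
    · rintro (h | h) rfl <;> exact hirr a h
    · intro h
      rcases htri a c with h' | h' | h'
      · exact absurd h' h
      · exact Or.inl h'
      · exact Or.inr h'
  have h1 : ({c}ᶜ : Set C).ncard = Fintype.card C - 1 := by
    have := Set.ncard_add_ncard_compl ({c} : Set C)
    rw [Set.ncard_singleton, Nat.card_eq_fintype_card] at this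
    omega
  rw [← Set.ncard_union_eq hdisj (Set.toFinite _) (Set.toFinite _), hunion, h1]

lemma rank_lt [Fintype C] {r : C → C → Prop} (hr : IsAxis r) {a b : C} (hab : r a b) :
    {y | r y a}.ncard < {y | r y b}.ncard := by
  obtain ⟨htri, htrans, hirr⟩ := hr
  apply Set.ncard_lt_ncard _ (Set.toFinite _)
  constructor
  · intro y hy; exact htrans y a b hy hab
  · intro hsub
    exact hirr a (hsub hab)

lemma rank_inj [Fintype C] {r : C → C → Prop} (hr : IsAxis r) {a b : C}
    (h : {y | r y a}.ncard = {y | r y b}.ncard) : a = b := by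
  rcases hr.1 a b with h' | h' | h'
  · exact h'
  · exact absurd h (Nat.ne_of_lt (rank_lt hr h'))
  · exact absurd h.symm (Nat.ne_of_lt (rank_lt hr h'))

theorem ft_veto_winner_centrism [Fintype C]
    (hodd : Odd (Fintype.card C)) (h3 : 3 ≤ Fintype.card C)
    (P : Multiset (Set C)) (hveto : ∀ A ∈ P, ∃ c : C, A = ({c}ᶜ : Set C))
    (r : C → C → Prop) (hr : OptimalAxis costFT P r)
    (x : C) (hmed : {y : C | r y x}.ncard = (Fintype.card C - 1) / 2) :
    ∀ z : C, approvalScore P z ≤ approvalScore P x := by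
  intro z
  by_contra hcon
  push_neg at hcon
  obtain ⟨haxis, hopt⟩ := hr
  have hzx : z ≠ x := by rintro rfl; exact lt_irrefl _ hcon
  set σ := Equiv.swap x z with hσ
  set r' : C → C → Prop := fun a b => r (σ a) (σ b) with hr'
  have haxis' : IsAxis r' := by
    obtain ⟨htri, htrans, hirr⟩ := haxis
    refine ⟨fun a b => ?_, fun a b c h1 h2 => htrans _ _ _ h1 h2, fun a => hirr _⟩
    rcases htri (σ a) (σ b) with h | h | h
    · exact Or.inl (σ.injective h)
    · exact Or.inr (Or.inl h)
    · exact Or.inr (Or.inr h)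
  have hbelow : ∀ c : C, {a | r' a c}.ncard = {a | r a (σ c)}.ncard := by
    intro c
    have hseteq : {a | r' a c} = σ.symm '' {a | r a (σ c)} := by
      ext a
      constructor
      · intro h; exact ⟨σ a, h, σ.symm_apply_apply a⟩
      · rintro ⟨b, hb, rfl⟩
        show r (σ (σ.symm b)) (σ c)
        simpa using hb
    rw [hseteq, Set.ncard_image_of_injective _ σ.symm.injective]
  have habove : ∀ c : C, {d | r' c d}.ncard = {d | r (σ c) d}.ncard := by
    intro c
    have hseteq : {d | r' c d} = σ.symm '' {d | r (σ c) d} := by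
      ext d
      constructor
      · intro h; exact ⟨σ d, h, σ.symm_apply_apply d⟩
      · rintro ⟨b, hb, rfl⟩
        show r (σ c) (σ (σ.symm b))
        simpa using hb
    rw [hseteq, Set.ncard_image_of_injective _ σ.symm.injective]
  have hF' : ∀ c : C, costFT r' ({c}ᶜ) = costFT r ({σ c}ᶜ) := by
    intro c
    rw [costFT_veto haxis', costFT_veto haxis, hbelow, habove]
  have hwv : costFT r ({z}ᶜ) < costFT r ({x}ᶜ) := by
    obtain ⟨k, hk⟩ := hodd
    have hmed' : {a | r a x}.ncard = k := by rw [hmed]; omega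
    have hsx := rank_sum haxis x
    have hsz := rank_sum haxis z
    have hne : {a | r a z}.ncard ≠ k := by
      intro h
      exact hzx (rank_inj haxis (h.trans hmed'.symm))
    rw [costFT_veto haxis z, costFT_veto haxis x]
    set b := {a | r a z}.ncard
    set u := {d | r z d}.ncard
    have hux : {d | r x d}.ncard = k := by omega
    rw [hmed', hux]
    have hbu : b + u = 2 * k := by omega
    rcases Nat.lt_or_ge b k with h1 | h1
    · have h2 : u = 2 * k - b := by omega
      nlinarith
    · have h1' : k < b := lt_of_le_of_ne h1 (Ne.symm hne)
      nlinarith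
  have hNzx : P.countP (fun A => z ∉ A) < P.countP (fun A => x ∉ A) := by
    have hx := Multiset.card_eq_countP_add_countP (fun A => x ∈ A) P
    have hz := Multiset.card_eq_countP_add_countP (fun A => z ∈ A) P
    simp only [approvalScore] at hcon
    omega
  have key : ∀ Q : Multiset (Set C), (∀ A ∈ Q, ∃ c : C, A = ({c}ᶜ : Set C)) →
      (Q.map (costFT r')).sum + Q.countP (fun A => x ∉ A) * costFT r ({x}ᶜ)
        + Q.countP (fun A => z ∉ A) * costFT r ({z}ᶜ)
      = (Q.map (costFT r)).sum + Q.countP (fun A => x ∉ A) * costFT r ({z}ᶜ)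
        + Q.countP (fun A => z ∉ A) * costFT r ({x}ᶜ) := by
    intro Q hQ
    induction Q using Multiset.induction with
    | empty => simp
    | cons A Q ih =>
      obtain ⟨c, rfl⟩ := hQ _ (Multiset.mem_cons_self _ _)
      have ih' := ih (fun B hB => hQ B (Multiset.mem_cons_of_mem hB))
      simp only [Multiset.map_cons, Multiset.sum_cons, Multiset.countP_cons, hF']
      by_cases hcx : c = x
      · subst hcx
        have hσc : σ c = z := Equiv.swap_apply_left c z
        rw [hσc]
        simp only [Set.mem_compl_iff, Set.mem_singleton_iff, not_not, hzx, if_true, if_false]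
        ring_nf
        ring_nf at ih'
        linarith
      · by_cases hcz : c = z
        · subst hcz
          have hσc : σ c = x := Equiv.swap_apply_right x c
          rw [hσc]
          have hxc : ¬ (x = c) := fun h => hcx h.symm
          simp only [Set.mem_compl_iff, Set.mem_singleton_iff, not_not, hxc, if_true, if_false]
          ring_nf
          ring_nf at ih'
          linarith
        · have hσc : σ c = c :=
            Equiv.swap_apply_of_ne_of_ne hcx hcz
          rw [hσc]
          have hxc : ¬ (x = c) := fun h => hcx h.symm
          have hzc : ¬ (z = c) := fun h => hcz h.symm
          simp only [Set.mem_compl_iff, Set.mem_singleton_iff, not_not, hxc, hzc, if_false]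
          ring_nf
          ring_nf at ih'
          linarith
  have hkey := key P hveto
  have hle := hopt r' haxis'
  unfold profileCost at hle
  have hmain : P.countP (fun A => x ∉ A) * costFT r ({x}ᶜ)
      + P.countP (fun A => z ∉ A) * costFT r ({z}ᶜ)
      ≤ P.countP (fun A => x ∉ A) * costFT r ({z}ᶜ)
      + P.countP (fun A => z ∉ A) * costFT r ({x}ᶜ) := by
    linarith
  set Nx := P.countP (fun A => x ∉ A)
  set Nz := P.countP (fun A => z ∉ A)
  set v := costFT r ({x}ᶜ : Set C)
  set w := costFT r ({z}ᶜ : Set C)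
  have h1 : (Nz : ℤ) < Nx := by exact_mod_cast hNzx
  have h2 : (w : ℤ) < v := by exact_mod_cast hwv
  have h3' : (Nx : ℤ) * v + Nz * w ≤ Nx * w + Nz * v := by exact_mod_cast hmain
  nlinarith
end

section
/- For every veto profile, every axis optimal for the Minimum Swaps rule has the property that its median candidate (for m odd, at position (m+1)/2) has the highest approval score. -/
open scoped Classical

variable {C : Type*}

section Helpers
set_option linter.unusedSectionVars false
variable [Fintype C] {r : C → C → Prop}

lemma axis_ne_of_rel (h : IsAxis r) {a b : C} (hab : r a b) : a ≠ b := by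
  rintro rfl; exact h.2.2 a hab

lemma bel_add_abv (h : IsAxis r) (c : C) :
    {y : C | r y c}.ncard + {y : C | r c y}.ncard = Fintype.card C - 1 := by
  have hdisj : Disjoint {y : C | r y c} {y : C | r c y} := by
    rw [Set.disjoint_left]
    intro y h1 h2
    exact h.2.2 c (h.2.1 c y c h2 h1)
  have hu : {y : C | r y c} ∪ {y : C | r c y} = ({c}ᶜ : Set C) := by
    ext y
    simp only [Set.mem_union, Set.mem_setOf_eq, Set.mem_compl_iff, Set.mem_singleton_iff]
    constructor
    · rintro (h1 | h1) rfl <;> exact h.2.2 _ h1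
    · intro hy
      rcases h.1 y c with h1 | h1 | h1
      · exact absurd h1 hy
      · exact Or.inl h1
      · exact Or.inr h1
  have h1 : ({c}ᶜ : Set C).ncard + ({c} : Set C).ncard = Nat.card C := by
    have := Set.ncard_add_ncard_compl ({c} : Set C) (Set.toFinite _) (Set.toFinite _)
    omega
  rw [← Set.ncard_union_eq hdisj (Set.toFinite _) (Set.toFinite _), hu]
  rw [Set.ncard_singleton, Nat.card_eq_fintype_card] at h1
  omega

lemma bel_lt (h : IsAxis r) {a b : C} (hab : r a b) :
    {y : C | r y a}.ncard < {y : C | r y b}.ncard := by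
  apply Set.ncard_lt_ncard _ (Set.toFinite _)
  constructor
  · intro y hy; exact h.2.1 y a b hy hab
  · intro hsub
    exact h.2.2 a (hsub hab)

lemma bel_inj (h : IsAxis r) {a b : C}
    (he : {y : C | r y a}.ncard = {y : C | r y b}.ncard) : a = b := by
  rcases h.1 a b with h1 | h1 | h1
  · exact h1
  · exact absurd he (Nat.ne_of_lt (bel_lt h h1))
  · exact absurd he.symm (Nat.ne_of_lt (bel_lt h h1))

lemma costMS_compl (h : IsAxis r) (c : C) :
    costMS r ({c}ᶜ : Set C) = min {y : C | r y c}.ncard {y : C | r c y}.ncard := by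
  unfold costMS
  rw [Finset.sum_eq_single c]
  · have hc : c ∉ ({c}ᶜ : Set C) := by simp
    rw [if_neg hc]
    congr 1
    · congr 1
      ext y
      simp only [Set.mem_setOf_eq, Set.mem_compl_iff, Set.mem_singleton_iff]
      exact ⟨fun hy => hy.2, fun hy => ⟨axis_ne_of_rel h hy, hy⟩⟩
    · congr 1
      ext y
      simp only [Set.mem_setOf_eq, Set.mem_compl_iff, Set.mem_singleton_iff]
      exact ⟨fun hy => hy.2, fun hy => ⟨(axis_ne_of_rel h hy).symm, hy⟩⟩
  · intro b _ hbc
    rw [if_pos (by simpa using hbc)]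
  · intro hc; exact absurd (Finset.mem_univ c) hc

lemma isAxis_comp (h : IsAxis r) (σ : Equiv.Perm C) :
    IsAxis (fun a b => r (σ a) (σ b)) := by
  refine ⟨fun a b => ?_, fun a b c h1 h2 => h.2.1 _ _ _ h1 h2, fun a => h.2.2 (σ a)⟩
  rcases h.1 (σ a) (σ b) with h1 | h1 | h1
  · exact Or.inl (σ.injective h1)
  · exact Or.inr (Or.inl h1)
  · exact Or.inr (Or.inr h1)

lemma ncard_preimage_perm (σ : Equiv.Perm C) (S : Set C) :
    (σ ⁻¹' S).ncard = S.ncard := by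
  have he : σ ⁻¹' S = σ.symm '' S := by
    rw [Equiv.image_eq_preimage_symm, Equiv.symm_symm]
  rw [he]
  exact Set.ncard_image_of_injective S σ.symm.injective

lemma costMS_comp (h : IsAxis r) (σ : Equiv.Perm C) (c : C) :
    costMS (fun a b => r (σ a) (σ b)) ({c}ᶜ : Set C) = costMS r ({σ c}ᶜ : Set C) := by
  rw [costMS_compl (isAxis_comp h σ), costMS_compl h]
  have h1 : {y : C | r (σ y) (σ c)} = σ ⁻¹' {y : C | r y (σ c)} := rfl
  have h2 : {y : C | r (σ c) (σ y)} = σ ⁻¹' {y : C | r (σ c) y} := rfl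
  rw [h1, h2, ncard_preimage_perm, ncard_preimage_perm]

end Helpers

theorem ms_veto_winner_centrism [Fintype C]
    (hodd : Odd (Fintype.card C)) (h3 : 3 ≤ Fintype.card C)
    (P : Multiset (Set C)) (hveto : ∀ A ∈ P, ∃ c : C, A = ({c}ᶜ : Set C))
    (r : C → C → Prop) (hr : OptimalAxis costMS P r)
    (x : C) (hmed : {y : C | r y x}.ncard = (Fintype.card C - 1) / 2) :
    ∀ z : C, approvalScore P z ≤ approvalScore P x := by
  by_contra hcon
  push_neg at hcon
  obtain ⟨z, hz⟩ := hcon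
  have hax := hr.1
  have hzx : z ≠ x := by rintro rfl; exact lt_irrefl _ hz
  obtain ⟨k, hk⟩ := hodd
  have hsx := bel_add_abv hax x
  have hsz := bel_add_abv hax z
  have hfx : costMS r ({x}ᶜ : Set C) = k := by
    rw [costMS_compl hax]; omega
  have hbelz : {y : C | r y z}.ncard ≠ {y : C | r y x}.ncard :=
    fun h => hzx (bel_inj hax h)
  have hfz : costMS r ({z}ᶜ : Set C) < k := by
    rw [costMS_compl hax]; omega
  set σ := Equiv.swap x z with hσ
  set r' := fun a b => r (σ a) (σ b) with hr'
  have hax' : IsAxis r' := isAxis_comp hax σ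
  -- decompose P
  set Pin := P.filter (fun A => x ∈ A) with hPin
  set Q1 := P.filter (fun A => ¬ x ∈ A) with hQ1
  have hsplit : Pin + Q1 = P := Multiset.filter_add_not _ P
  set S := Pin.filter (fun A => z ∈ A) with hS
  set Q2 := Pin.filter (fun A => ¬ z ∈ A) with hQ2
  have hsplit2 : S + Q2 = Pin := Multiset.filter_add_not _ Pin
  have hQ1mem : ∀ A ∈ Q1, A = ({x}ᶜ : Set C) := by
    intro A hA
    rw [hQ1, Multiset.mem_filter] at hA
    obtain ⟨c, rfl⟩ := hveto A hA.1
    have hxc : x = c := by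
      have := hA.2
      simp only [Set.mem_compl_iff, Set.mem_singleton_iff, not_not] at this
      exact this
    rw [hxc]
  have hQ2mem : ∀ A ∈ Q2, A = ({z}ᶜ : Set C) := by
    intro A hA
    rw [hQ2, Multiset.mem_filter, hPin, Multiset.mem_filter] at hA
    obtain ⟨c, rfl⟩ := hveto A hA.1.1
    have hzc : z = c := by
      have := hA.2
      simp only [Set.mem_compl_iff, Set.mem_singleton_iff, not_not] at this
      exact this
    rw [hzc]
  have hSmem : ∀ A ∈ S, costMS r' A = costMS r A := by
    intro A hA
    rw [hS, Multiset.mem_filter, hPin, Multiset.mem_filter] at hA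
    obtain ⟨c, rfl⟩ := hveto _ hA.1.1
    have hcx : c ≠ x := by rintro rfl; exact hA.1.2 rfl
    have hcz : c ≠ z := by rintro rfl; exact hA.2 rfl
    rw [hr', costMS_comp hax σ c, hσ, Equiv.swap_apply_of_ne_of_ne hcx hcz]
  have key : ∀ (f : Set C → ℕ) (Q : Multiset (Set C)) (B : Set C), (∀ A ∈ Q, A = B) →
      (Q.map f).sum = Multiset.card Q * f B := by
    intro f Q B hQ
    have hrep : Q.map f = Multiset.replicate (Multiset.card Q) (f B) := by
      rw [Multiset.eq_replicate]
      refine ⟨Multiset.card_map f Q, ?_⟩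
      intro b hb
      obtain ⟨A, hA, rfl⟩ := Multiset.mem_map.1 hb
      rw [hQ A hA]
    rw [hrep, Multiset.sum_replicate, smul_eq_mul]
  have hdec : ∀ f : Set C → ℕ,
      (P.map f).sum = (S.map f).sum + (Q2.map f).sum + (Q1.map f).sum := by
    intro f
    conv_lhs => rw [← hsplit, ← hsplit2]
    rw [Multiset.map_add, Multiset.map_add, Multiset.sum_add, Multiset.sum_add]
  -- cost of r
  set T := (S.map (costMS r)).sum with hT
  have hcostr : profileCost costMS P r =
      T + Multiset.card Q2 * costMS r ({z}ᶜ : Set C) + Multiset.card Q1 * k := by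
    rw [profileCost, hdec, key _ Q1 _ hQ1mem, key _ Q2 _ hQ2mem, hfx, hT]
  have hσz : σ z = x := Equiv.swap_apply_right x z
  have hσx : σ x = z := Equiv.swap_apply_left x z
  have hcostr' : profileCost costMS P r' =
      T + Multiset.card Q2 * k + Multiset.card Q1 * costMS r ({z}ᶜ : Set C) := by
    rw [profileCost, hdec, key _ Q1 _ hQ1mem, key _ Q2 _ hQ2mem]
    have e1 : costMS r' ({z}ᶜ : Set C) = k := by
      rw [hr', costMS_comp hax σ z, hσz, hfx]
    have e2 : costMS r' ({x}ᶜ : Set C) = costMS r ({z}ᶜ : Set C) := by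
      rw [hr', costMS_comp hax σ x, hσx]
    have e3 : (S.map (costMS r')).sum = T := by
      rw [hT]; exact congrArg Multiset.sum (Multiset.map_congr rfl hSmem)
    rw [e1, e2, e3]
  -- cardinalities
  have hcards : Multiset.card Q2 < Multiset.card Q1 := by
    have h1 : Multiset.card Pin + Multiset.card Q1 = Multiset.card P := by
      rw [← Multiset.card_add, hsplit]
    have h2 : Multiset.card S + Multiset.card Q2 = Multiset.card Pin := by
      rw [← Multiset.card_add, hsplit2]
    have h3 : approvalScore P x = Multiset.card Pin := by
      rw [approvalScore, hPin, Multiset.countP_eq_card_filter]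
    have h4 : approvalScore P z =
        Multiset.card S + Multiset.card Q1 := by
      rw [approvalScore]
      have := congrArg (Multiset.countP (fun A => z ∈ A)) hsplit
      rw [Multiset.countP_add] at this
      rw [← this]
      congr 1
      · rw [hS, Multiset.countP_eq_card_filter]
      · rw [Multiset.countP_eq_card]
        intro A hA
        rw [hQ1mem A hA]
        simp [hzx]
    omega
  -- conclude
  have hle := hr.2 r' hax'
  rw [hcostr, hcostr'] at hle
  set fz := costMS r ({z}ᶜ : Set C)
  obtain ⟨p, hp⟩ := Nat.exists_eq_add_of_lt hcards
  obtain ⟨q, hq⟩ := Nat.exists_eq_add_of_lt hfz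
  rw [hp, hq] at hle
  nlinarith [hle]
end
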